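/- arXiv:math/0601393 — 9 statements merged into one kernel-verified Lean document; each statement's English description precedes it below -/
import Mathlib

section
/- Let (A, v, w) be an n-dimensional triple. Then there exists a finite sequence of allowable column additions (A, v, w) → (A(1), v, w(1)) → … → (A(t), v, w(t)) such that at most two entries of the first column of B(t) = A(t)⁻¹ are nonzero. -/
open Matrix

/-- The vector `w = A⁻¹ · v`, computed over the reals. -/
noncomputable def wvec {n : ℕ} (A : Matrix (Fin n) (Fin n) ℤ) (v : Fin n → ℝ) : Fin n → ℝ :=
  (A.map (Int.cast : ℤ → ℝ))⁻¹ *ᵥ v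

/-- The inverse matrix `B = A⁻¹`, computed over the reals. -/
noncomputable def Binv {n : ℕ} (A : Matrix (Fin n) (Fin n) ℤ) : Matrix (Fin n) (Fin n) ℝ :=
  (A.map (Int.cast : ℤ → ℝ))⁻¹

/-- `(A, v, w)` is an `n`-dimensional triple, where `w = wvec A v` is determined by `A` and
`v`: the entries of `A` are nonnegative integers, `det A = ±1`, the entries of `v` are
positive real numbers which are linearly independent over `ℚ`, and all entries of
`w = A⁻¹ v` are positive. -/
structure IsTriple {n : ℕ} (A : Matrix (Fin n) (Fin n) ℤ) (v : Fin n → ℝ) : Prop where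
  nonneg : ∀ i j, 0 ≤ A i j
  det_pm : A.det = 1 ∨ A.det = -1
  v_pos : ∀ i, 0 < v i
  v_indep : LinearIndependent ℚ v
  w_pos : ∀ i, 0 < wvec A v i

/-- The column addition `C_{ij}`: the `i`-th column of `A` is replaced by the sum of the
`i`-th and `j`-th columns. -/
def colAdd {n : ℕ} (A : Matrix (Fin n) (Fin n) ℤ) (i j : Fin n) : Matrix (Fin n) (Fin n) ℤ :=
  A.updateCol i fun k => A k i + A k j

/-- An allowable column addition (for the triple determined by the current matrix `A`
and the fixed vector `v`): a permissible column addition `C_{ij}` (i.e. `w j - w i > 0`)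
such that `b_{i1}` and `b_{j1}` are both nonzero and have the same sign, i.e.
`b_{i1} · b_{j1} > 0`, where `B = A⁻¹`. -/
def AllowStep {n : ℕ} [NeZero n] (v : Fin n → ℝ) (A A' : Matrix (Fin n) (Fin n) ℤ) : Prop :=
  ∃ i j : Fin n, i ≠ j ∧ 0 < wvec A v j - wvec A v i ∧
    0 < Binv A i 0 * Binv A j 0 ∧ A' = colAdd A i j

namespace Red

variable {n : ℕ}

/-- integral inverse -/
def Bint (A : Matrix (Fin n) (Fin n) ℤ) : Matrix (Fin n) (Fin n) ℤ := A.det • A.adjugate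

def Udet (A : Matrix (Fin n) (Fin n) ℤ) : Prop := A.det = 1 ∨ A.det = -1

lemma mul_Bint (A : Matrix (Fin n) (Fin n) ℤ) (h : Udet A) : A * Bint A = 1 := by
  have hd : A.det * A.det = 1 := by rcases h with h | h <;> rw [h] <;> norm_num
  rw [Bint, Matrix.mul_smul, Matrix.mul_adjugate, smul_smul, hd, one_smul]

lemma Bint_mul (A : Matrix (Fin n) (Fin n) ℤ) (h : Udet A) : Bint A * A = 1 :=
  mul_eq_one_comm.mp (mul_Bint A h)

lemma map_mul_Bint_cast (A : Matrix (Fin n) (Fin n) ℤ) (h : Udet A) :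
    (A.map (Int.cast : ℤ → ℝ)) * ((Bint A).map (Int.cast : ℤ → ℝ)) = 1 := by
  have h2 : (A * Bint A).map (Int.cast : ℤ → ℝ)
      = A.map (Int.cast : ℤ → ℝ) * (Bint A).map (Int.cast : ℤ → ℝ) := by
    have := Matrix.map_mul (L := A) (M := Bint A) (f := Int.castRingHom ℝ)
    simpa using this
  rw [← h2, mul_Bint A h]
  exact Matrix.map_one _ (by simp) (by simp)

lemma Binv_eq (A : Matrix (Fin n) (Fin n) ℤ) (h : Udet A) :
    Binv A = (Bint A).map (Int.cast : ℤ → ℝ) := by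
  rw [Binv]
  exact Matrix.inv_eq_right_inv (map_mul_Bint_cast A h)

/-- the integer first column of the inverse -/
def icvec (A : Matrix (Fin n) (Fin n) ℤ) [NeZero n] : Fin n → ℤ := fun k => Bint A k 0

lemma Binv_apply [NeZero n] (A : Matrix (Fin n) (Fin n) ℤ) (h : Udet A) (k : Fin n) :
    Binv A k 0 = (icvec A k : ℝ) := by
  rw [Binv_eq A h]; rfl

lemma colAdd_eq (A : Matrix (Fin n) (Fin n) ℤ) (i j : Fin n) (hij : i ≠ j) :
    colAdd A i j = A * transvection j i (1 : ℤ) := by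
  ext k l
  by_cases hl : l = i
  · subst hl
    rw [Matrix.mul_transvection_apply_same]
    simp [colAdd, Matrix.updateCol_apply, add_comm]
  · rw [Matrix.mul_transvection_apply_of_ne _ _ _ _ hl]
    simp [colAdd, Matrix.updateCol_apply, hl]

lemma det_colAdd (A : Matrix (Fin n) (Fin n) ℤ) (i j : Fin n) (hij : i ≠ j) :
    (colAdd A i j).det = A.det := by
  rw [colAdd_eq A i j hij, Matrix.det_mul, Matrix.det_transvection_of_ne _ _ hij.symm, mul_one]

lemma map_transvection (i j : Fin n) (hij : i ≠ j) :
    (transvection j i (1 : ℤ)).map (Int.cast : ℤ → ℝ) = transvection j i (1 : ℝ) := by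
  ext k l
  simp [transvection, Matrix.add_apply, Matrix.map_apply, Matrix.one_apply,
    Matrix.single]

lemma map_colAdd (A : Matrix (Fin n) (Fin n) ℤ) (i j : Fin n) (hij : i ≠ j) :
    (colAdd A i j).map (Int.cast : ℤ → ℝ)
      = (A.map (Int.cast : ℤ → ℝ)) * transvection j i (1 : ℝ) := by
  rw [colAdd_eq A i j hij, ← map_transvection i j hij]
  have := Matrix.map_mul (L := A) (M := transvection j i (1:ℤ)) (f := Int.castRingHom ℝ)
  simpa using this

lemma transvection_inv (i j : Fin n) (hij : i ≠ j) :
    (transvection j i (1 : ℝ))⁻¹ = transvection j i (-1 : ℝ) := by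
  apply Matrix.inv_eq_right_inv
  rw [Matrix.transvection_mul_transvection_same (i := j) (j := i) hij.symm]
  norm_num

lemma Binv_colAdd (A : Matrix (Fin n) (Fin n) ℤ) (i j : Fin n) (hij : i ≠ j) :
    Binv (colAdd A i j) = transvection j i (-1 : ℝ) * Binv A := by
  rw [Binv, Binv, map_colAdd A i j hij, Matrix.mul_inv_rev, transvection_inv i j hij]

lemma Binv_colAdd_apply_same (A : Matrix (Fin n) (Fin n) ℤ) (i j : Fin n) (hij : i ≠ j)
    (l : Fin n) : Binv (colAdd A i j) j l = Binv A j l - Binv A i l := by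
  rw [Binv_colAdd A i j hij, Matrix.transvection_mul_apply_same]; ring

lemma Binv_colAdd_apply_ne (A : Matrix (Fin n) (Fin n) ℤ) (i j : Fin n) (hij : i ≠ j)
    (k l : Fin n) (hk : k ≠ j) : Binv (colAdd A i j) k l = Binv A k l := by
  rw [Binv_colAdd A i j hij, Matrix.transvection_mul_apply_of_ne _ _ _ _ hk]

lemma wvec_colAdd_same (A : Matrix (Fin n) (Fin n) ℤ) (v : Fin n → ℝ) (i j : Fin n)
    (hij : i ≠ j) : wvec (colAdd A i j) v j = wvec A v j - wvec A v i := by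
  show (Binv (colAdd A i j) *ᵥ v) j = (Binv A *ᵥ v) j - (Binv A *ᵥ v) i
  simp only [Matrix.mulVec, dotProduct]
  rw [← Finset.sum_sub_distrib]
  apply Finset.sum_congr rfl
  intro m _
  rw [Binv_colAdd_apply_same A i j hij]
  ring

lemma wvec_colAdd_ne (A : Matrix (Fin n) (Fin n) ℤ) (v : Fin n → ℝ) (i j : Fin n)
    (hij : i ≠ j) (k : Fin n) (hk : k ≠ j) : wvec (colAdd A i j) v k = wvec A v k := by
  show (Binv (colAdd A i j) *ᵥ v) k = (Binv A *ᵥ v) k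
  simp only [Matrix.mulVec, dotProduct]
  apply Finset.sum_congr rfl
  intro m _
  rw [Binv_colAdd_apply_ne A i j hij _ _ hk]

lemma icvec_colAdd_same [NeZero n] (A : Matrix (Fin n) (Fin n) ℤ) (i j : Fin n) (hij : i ≠ j)
    (h : Udet A) : icvec (colAdd A i j) j = icvec A j - icvec A i := by
  have h' : Udet (colAdd A i j) := by rw [Udet, det_colAdd A i j hij]; exact h
  have := Binv_colAdd_apply_same A i j hij 0
  rw [Binv_apply _ h' j, Binv_apply _ h i, Binv_apply _ h j] at this
  exact_mod_cast this

lemma icvec_colAdd_ne [NeZero n] (A : Matrix (Fin n) (Fin n) ℤ) (i j : Fin n) (hij : i ≠ j)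
    (h : Udet A) (k : Fin n) (hk : k ≠ j) : icvec (colAdd A i j) k = icvec A k := by
  have h' : Udet (colAdd A i j) := by rw [Udet, det_colAdd A i j hij]; exact h
  have := Binv_colAdd_apply_ne A i j hij k 0 hk
  rw [Binv_apply _ h' k, Binv_apply _ h k] at this
  exact_mod_cast this

section P2
open Finset
variable [NeZero n] (v : Fin n → ℝ)

/-- invariant carried along the chain -/
def Inv (A : Matrix (Fin n) (Fin n) ℤ) : Prop := Udet A ∧ ∀ k, 0 < wvec A v k

lemma wvec_eq_sum (A : Matrix (Fin n) (Fin n) ℤ) (h : Udet A) (k : Fin n) :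
    wvec A v k = ∑ m, (Bint A k m : ℝ) * v m := by
  show (Binv A *ᵥ v) k = _
  rw [Binv_eq A h]
  simp [Matrix.mulVec, dotProduct, Matrix.map_apply]

lemma wvec_ne (A : Matrix (Fin n) (Fin n) ℤ) (h : Udet A) (hv : LinearIndependent ℚ v)
    {k l : Fin n} (hkl : k ≠ l) : wvec A v k ≠ wvec A v l := by
  intro he
  rw [wvec_eq_sum v A h, wvec_eq_sum v A h] at he
  have hg : ∀ m, ((Bint A k m - Bint A l m : ℤ) : ℚ) = 0 := by
    refine (Fintype.linearIndependent_iff.mp hv) (fun m => ((Bint A k m - Bint A l m : ℤ) : ℚ)) ?_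
    have hterm : ∀ m : Fin n, (((Bint A k m - Bint A l m : ℤ) : ℚ)) • v m
        = (Bint A k m : ℝ) * v m - (Bint A l m : ℝ) * v m := by
      intro m
      rw [Rat.smul_def]
      push_cast
      ring
    rw [Finset.sum_congr rfl (fun m _ => hterm m), Finset.sum_sub_distrib, he, sub_self]
  have hrow : ∀ m, Bint A k m = Bint A l m := by
    intro m
    have := hg m
    have : ((Bint A k m - Bint A l m : ℤ) : ℚ) = ((0 : ℤ) : ℚ) := by simpa using this
    have := Int.cast_injective this
    omega
  have e1 : (Bint A * A) k k = (Bint A * A) l k := by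
    simp only [Matrix.mul_apply]
    exact Finset.sum_congr rfl fun m _ => by rw [hrow m]
  rw [Bint_mul A h] at e1
  rw [Matrix.one_apply_eq, Matrix.one_apply_ne (Ne.symm hkl)] at e1
  exact one_ne_zero e1

lemma step_allow (A : Matrix (Fin n) (Fin n) ℤ) (hInv : Inv v A) {i j : Fin n} (hij : i ≠ j)
    (hsign : 0 < icvec A i * icvec A j) (hw : wvec A v i < wvec A v j) :
    AllowStep v A (colAdd A i j) := by
  refine ⟨i, j, hij, by linarith, ?_, rfl⟩
  rw [Binv_apply _ hInv.1, Binv_apply _ hInv.1]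
  exact_mod_cast hsign

lemma step_Inv (A : Matrix (Fin n) (Fin n) ℤ) (hInv : Inv v A) {i j : Fin n} (hij : i ≠ j)
    (hw : wvec A v i < wvec A v j) : Inv v (colAdd A i j) := by
  constructor
  · unfold Udet
    rw [det_colAdd A i j hij]
    exact hInv.1
  · intro k
    by_cases hk : k = j
    · rw [hk, wvec_colAdd_same A v i j hij]
      linarith
    · rw [wvec_colAdd_ne A v i j hij k hk]
      exact hInv.2 k

/-- set of indices with nonzero entry in first column of the inverse -/
def NZ (A : Matrix (Fin n) (Fin n) ℤ) : Finset (Fin n) :=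
  Finset.univ.filter fun k => icvec A k ≠ 0

def cnt (A : Matrix (Fin n) (Fin n) ℤ) : ℕ := (NZ A).card

def Mx (A : Matrix (Fin n) (Fin n) ℤ) : ℕ := Finset.univ.sup fun k => (icvec A k).natAbs

def attr (A : Matrix (Fin n) (Fin n) ℤ) : Finset (Fin n) :=
  Finset.univ.filter fun k => (icvec A k).natAbs = Mx A ∧ icvec A k ≠ 0

noncomputable def dlt (A : Matrix (Fin n) (Fin n) ℤ) : ℝ :=
  if h : (attr A).Nonempty then (attr A).inf' h fun k => wvec A v k else 1

noncomputable def c4 (A : Matrix (Fin n) (Fin n) ℤ) : ℕ :=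
  ⌊(∑ k, wvec A v k) / dlt v A⌋₊

def sC (A : Matrix (Fin n) (Fin n) ℤ) : ℕ :=
  ∑ k ∈ (NZ A).filter (fun k => ¬ ∃ l ∈ attr A, 0 < icvec A k * icvec A l),
    (icvec A k).natAbs

lemma natAbs_le_Mx (A : Matrix (Fin n) (Fin n) ℤ) (k : Fin n) :
    (icvec A k).natAbs ≤ Mx A :=
  show (icvec A k).natAbs ≤ Finset.univ.sup (fun k => (icvec A k).natAbs) from
    Finset.le_sup (f := fun k => (icvec A k).natAbs) (Finset.mem_univ k)

lemma mem_NZ_iff {A : Matrix (Fin n) (Fin n) ℤ} {k : Fin n} : k ∈ NZ A ↔ icvec A k ≠ 0 := by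
  simp [NZ]

lemma mem_attr_iff {A : Matrix (Fin n) (Fin n) ℤ} {k : Fin n} :
    k ∈ attr A ↔ (icvec A k).natAbs = Mx A ∧ icvec A k ≠ 0 := by simp [attr]

lemma attr_nonempty {A : Matrix (Fin n) (Fin n) ℤ} (h : 0 < cnt A) : (attr A).Nonempty := by
  obtain ⟨k0, hk0⟩ := Finset.card_pos.mp h
  have hk0' : icvec A k0 ≠ 0 := mem_NZ_iff.mp hk0
  obtain ⟨x, -, hx⟩ := Finset.exists_mem_eq_sup Finset.univ
    (Finset.univ_nonempty) (fun k => (icvec A k).natAbs)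
  have h3 : (icvec A x).natAbs = Mx A := hx.symm
  refine ⟨x, mem_attr_iff.mpr ⟨h3, ?_⟩⟩
  have h1 : 1 ≤ (icvec A k0).natAbs := by omega
  have h2 := natAbs_le_Mx A k0
  omega

lemma Mx_pos {A : Matrix (Fin n) (Fin n) ℤ} (h : 0 < cnt A) : 1 ≤ Mx A := by
  obtain ⟨k0, hk0⟩ := Finset.card_pos.mp h
  have hk0' : icvec A k0 ≠ 0 := mem_NZ_iff.mp hk0
  have := natAbs_le_Mx A k0
  omega

lemma dlt_pos (A : Matrix (Fin n) (Fin n) ℤ) (hInv : Inv v A) : 0 < dlt v A := by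
  rw [dlt]
  split_ifs with h
  · rw [Finset.lt_inf'_iff]
    exact fun k _ => hInv.2 k
  · norm_num

lemma dlt_le (A : Matrix (Fin n) (Fin n) ℤ) {x : Fin n} (hx : x ∈ attr A) :
    dlt v A ≤ wvec A v x := by
  rw [dlt]
  split_ifs with h
  · exact Finset.inf'_le _ hx
  · exact absurd ⟨x, hx⟩ h

end P2

section P3
open Finset
variable [NeZero n] (v : Fin n → ℝ)
variable {A : Matrix (Fin n) (Fin n) ℤ} {i j : Fin n}

lemma sign_cases (hsign : 0 < icvec A i * icvec A j) :
    (0 < icvec A i ∧ 0 < icvec A j) ∨ (icvec A i < 0 ∧ icvec A j < 0) := mul_pos_iff.mp hsign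

lemma abs_j_lt (hij : i ≠ j) (hU : Udet A) (hsign : 0 < icvec A i * icvec A j) :
    (icvec (colAdd A i j) j).natAbs + 1 ≤ Mx A := by
  rw [icvec_colAdd_same A i j hij hU]
  have h1 := natAbs_le_Mx A i
  have h2 := natAbs_le_Mx A j
  rcases sign_cases hsign with ⟨u1, u2⟩ | ⟨u1, u2⟩ <;> omega

lemma NZ_step_subset (hij : i ≠ j) (hU : Udet A) (hsign : 0 < icvec A i * icvec A j) :
    NZ (colAdd A i j) ⊆ NZ A := by
  intro k hk
  rw [mem_NZ_iff] at hk ⊢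
  by_cases hkj : k = j
  · rw [hkj]
    rcases sign_cases hsign with ⟨u1, u2⟩ | ⟨u1, u2⟩ <;> omega
  · rwa [icvec_colAdd_ne A i j hij hU k hkj] at hk

lemma cnt_step_le (hij : i ≠ j) (hU : Udet A) (hsign : 0 < icvec A i * icvec A j) :
    cnt (colAdd A i j) ≤ cnt A := Finset.card_le_card (NZ_step_subset hij hU hsign)

lemma Mx_step_le (hij : i ≠ j) (hU : Udet A) (hsign : 0 < icvec A i * icvec A j) :
    Mx (colAdd A i j) ≤ Mx A := by
  apply Finset.sup_le
  intro k _
  by_cases hkj : k = j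
  · rw [hkj]
    have := abs_j_lt hij hU hsign
    omega
  · rw [icvec_colAdd_ne A i j hij hU k hkj]
    exact natAbs_le_Mx A k

lemma Mx_step_eq (hij : i ≠ j) (hU : Udet A) (hsign : 0 < icvec A i * icvec A j)
    {x : Fin n} (hx : x ∈ attr A) (hxj : x ≠ j) : Mx (colAdd A i j) = Mx A := by
  refine le_antisymm (Mx_step_le hij hU hsign) ?_
  have hx' : icvec (colAdd A i j) x = icvec A x := icvec_colAdd_ne A i j hij hU x hxj
  have h1 : (icvec A x).natAbs = Mx A := (mem_attr_iff.mp hx).1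
  have h2 := natAbs_le_Mx (colAdd A i j) x
  rw [hx'] at h2
  omega

lemma attr_step_eq (hij : i ≠ j) (hU : Udet A) (hsign : 0 < icvec A i * icvec A j)
    {x : Fin n} (hx : x ∈ attr A) (hxj : x ≠ j) (hjn : j ∉ attr A) :
    attr (colAdd A i j) = attr A := by
  have hMx := Mx_step_eq hij hU hsign hx hxj
  ext k
  rw [mem_attr_iff, mem_attr_iff, hMx]
  by_cases hkj : k = j
  · subst hkj
    have h1 := abs_j_lt hij hU hsign
    have h2 : 1 ≤ Mx A := Mx_pos (n := n) (A := A) (by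
      have : k ∈ NZ A := mem_NZ_iff.mpr (by
        rcases sign_cases hsign with ⟨u1, u2⟩ | ⟨u1, u2⟩ <;> omega)
      exact Finset.card_pos.mpr ⟨k, this⟩)
    constructor
    · rintro ⟨ha, -⟩
      omega
    · intro hmem
      exact absurd (mem_attr_iff.mpr hmem) hjn
  · rw [icvec_colAdd_ne A i j hij hU k hkj]

lemma dlt_step_eq (hij : i ≠ j) (hU : Udet A) (hsign : 0 < icvec A i * icvec A j)
    {x : Fin n} (hx : x ∈ attr A) (hxj : x ≠ j) (hjn : j ∉ attr A) :
    dlt v (colAdd A i j) = dlt v A := by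
  have hattr := attr_step_eq hij hU hsign hx hxj hjn
  rw [dlt, dlt]
  rcases em (attr A).Nonempty with h | h
  · rw [dif_pos (by rw [hattr]; exact h), dif_pos h]
    refine Finset.inf'_congr _ hattr ?_
    intro k hk
    rw [hattr] at hk
    have : k ≠ j := fun he => hjn (he ▸ hk)
    exact wvec_colAdd_ne A v i j hij k this
  · rw [dif_neg (by rw [hattr]; exact h), dif_neg h]

lemma sum_w_step (hij : i ≠ j) :
    ∑ k, wvec (colAdd A i j) v k = (∑ k, wvec A v k) - wvec A v i := by
  have e3 : ∑ k ∈ Finset.univ.erase j, wvec (colAdd A i j) v k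
      = ∑ k ∈ Finset.univ.erase j, wvec A v k :=
    Finset.sum_congr rfl fun k hk =>
      wvec_colAdd_ne A v i j hij k (Finset.ne_of_mem_erase hk)
  calc ∑ k, wvec (colAdd A i j) v k
      = wvec (colAdd A i j) v j + ∑ k ∈ Finset.univ.erase j, wvec (colAdd A i j) v k :=
        (Finset.add_sum_erase Finset.univ (fun k => wvec (colAdd A i j) v k)
          (Finset.mem_univ j)).symm
    _ = (wvec A v j - wvec A v i) + ∑ k ∈ Finset.univ.erase j, wvec A v k := by
        rw [e3, wvec_colAdd_same A v i j hij]
    _ = (∑ k, wvec A v k) - wvec A v i := by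
        rw [← Finset.add_sum_erase Finset.univ (fun k => wvec A v k) (Finset.mem_univ j)]
        ring

lemma c4_step_lt (hInv : Inv v A) (hij : i ≠ j) (hU : Udet A)
    (hsign : 0 < icvec A i * icvec A j) (hw : wvec A v i < wvec A v j)
    (hd : dlt v (colAdd A i j) = dlt v A) (hi : i ∈ attr A) :
    c4 v (colAdd A i j) < c4 v A := by
  have hdp := dlt_pos v A hInv
  have hwi := dlt_le v A hi
  have hInv' := step_Inv v A hInv hij hw
  have hsum := sum_w_step v (A := A) hij
  have hS'0 : 0 ≤ ∑ k, wvec (colAdd A i j) v k :=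
    Finset.sum_nonneg fun k _ => (hInv'.2 k).le
  have h0 : (c4 v (colAdd A i j) : ℝ) ≤ (∑ k, wvec (colAdd A i j) v k) / dlt v A := by
    rw [c4, hd]
    exact Nat.floor_le (by positivity)
  have key : ((c4 v (colAdd A i j) + 1 : ℕ) : ℝ) ≤ (∑ k, wvec A v k) / dlt v A := by
    push_cast
    have hstep : (∑ k, wvec (colAdd A i j) v k) / dlt v A + 1
        ≤ (∑ k, wvec A v k) / dlt v A := by
      rw [div_add' _ _ _ (ne_of_gt hdp)]
      refine (div_le_div_iff_of_pos_right hdp).mpr ?_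
      rw [hsum]
      linarith
    linarith
  have : c4 v (colAdd A i j) + 1 ≤ c4 v A := Nat.le_floor key
  omega

lemma c4_step_le (hInv : Inv v A) (hij : i ≠ j)
    (hd : dlt v (colAdd A i j) = dlt v A) :
    c4 v (colAdd A i j) ≤ c4 v A := by
  have hdp := dlt_pos v A hInv
  have hsum := sum_w_step v (A := A) hij
  rw [c4, c4, hd, hsum]
  apply Nat.floor_le_floor
  apply (div_le_div_iff_of_pos_right hdp).mpr
  linarith [hInv.2 i]

end P3

section P4
open Finset
variable [NeZero n] (v : Fin n → ℝ)

/-- lexicographic decrease of the measure -/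
def Dec (A A' : Matrix (Fin n) (Fin n) ℤ) : Prop :=
  cnt A' < cnt A ∨ (cnt A' = cnt A ∧ (Mx A' < Mx A ∨ (Mx A' = Mx A ∧
    ((attr A').card < (attr A).card ∨ ((attr A').card = (attr A).card ∧
      (c4 v A' < c4 v A ∨ (c4 v A' = c4 v A ∧ sC A' < sC A)))))))

variable {A : Matrix (Fin n) (Fin n) ℤ} {i j : Fin n}

lemma caseA (hInv : Inv v A) (hij : i ≠ j) (hsgn : 0 < icvec A i * icvec A j)
    (hw : wvec A v i < wvec A v j) (hj : j ∈ attr A) :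
    ∃ A', AllowStep v A A' ∧ Inv v A' ∧ Dec v A A' := by
  have hU := hInv.1
  refine ⟨colAdd A i j, step_allow v A hInv hij hsgn hw, step_Inv v A hInv hij hw, ?_⟩
  rcases lt_or_eq_of_le (cnt_step_le hij hU hsgn) with hc | hc
  · exact Or.inl hc
  right
  refine ⟨hc, ?_⟩
  rcases lt_or_eq_of_le (Mx_step_le hij hU hsgn) with hm | hm
  · exact Or.inl hm
  right
  refine ⟨hm, Or.inl ?_⟩
  have hsub : attr (colAdd A i j) ⊆ (attr A).erase j := by
    intro k hk
    obtain ⟨hk1, hk2⟩ := mem_attr_iff.mp hk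
    have hkj : k ≠ j := by
      intro he
      subst he
      have := abs_j_lt hij hU hsgn
      omega
    refine Finset.mem_erase.mpr ⟨hkj, ?_⟩
    rw [icvec_colAdd_ne A i j hij hU k hkj] at hk1 hk2
    exact mem_attr_iff.mpr ⟨by omega, hk2⟩
  calc (attr (colAdd A i j)).card ≤ ((attr A).erase j).card := Finset.card_le_card hsub
    _ < (attr A).card := by
        rw [Finset.card_erase_of_mem hj]
        have : 0 < (attr A).card := Finset.card_pos.mpr ⟨j, hj⟩
        omega

lemma caseB (hInv : Inv v A) (hij : i ≠ j) (hsgn : 0 < icvec A i * icvec A j)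
    (hw : wvec A v i < wvec A v j) (hi : i ∈ attr A) (hjn : j ∉ attr A) :
    ∃ A', AllowStep v A A' ∧ Inv v A' ∧ Dec v A A' := by
  have hU := hInv.1
  refine ⟨colAdd A i j, step_allow v A hInv hij hsgn hw, step_Inv v A hInv hij hw, ?_⟩
  rcases lt_or_eq_of_le (cnt_step_le hij hU hsgn) with hc | hc
  · exact Or.inl hc
  have hxj : i ≠ j := hij
  have hMx := Mx_step_eq hij hU hsgn hi hxj
  have hattr := attr_step_eq hij hU hsgn hi hxj hjn
  have hd := dlt_step_eq v hij hU hsgn hi hxj hjn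
  exact Or.inr ⟨hc, Or.inr ⟨hMx, Or.inr ⟨by rw [hattr],
    Or.inl (c4_step_lt v hInv hij hU hsgn hw hd hi)⟩⟩⟩

lemma caseC_key (ck cl cx : ℤ) (hkl : 0 < ck * cl) (hlx : cx * cl < 0) :
    (cl - ck = 0) ∨ (0 < (cl - ck) * cx) ∨
      ((cl - ck) ≠ 0 ∧ ¬ (0 < (cl - ck) * cx) ∧ (cl - ck).natAbs + 1 ≤ cl.natAbs) := by
  rcases mul_pos_iff.mp hkl with ⟨h1, h2⟩ | ⟨h1, h2⟩
  · have hx : cx < 0 := by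
      by_contra hcx
      push_neg at hcx
      exact absurd (mul_nonneg hcx h2.le) (not_le.mpr hlx)
    rcases lt_trichotomy (cl - ck) 0 with h | h | h
    · exact Or.inr (Or.inl (mul_pos_of_neg_of_neg h hx))
    · exact Or.inl h
    · refine Or.inr (Or.inr ⟨ne_of_gt h, not_lt.mpr (mul_neg_of_pos_of_neg h hx).le, by omega⟩)
  · have hx : 0 < cx := by
      rcases lt_trichotomy cx 0 with h | h | h
      · exact absurd (mul_pos_of_neg_of_neg h h2) (by rw [not_lt]; exact hlx.le)
      · rw [h] at hlx; simp at hlx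
      · exact h
    rcases lt_trichotomy (cl - ck) 0 with h | h | h
    · refine Or.inr (Or.inr ⟨ne_of_lt h, not_lt.mpr (mul_neg_of_neg_of_pos h hx).le, by omega⟩)
    · exact Or.inl h
    · exact Or.inr (Or.inl (mul_pos h hx))

lemma caseC (hInv : Inv v A) (hij : i ≠ j) (hsgn : 0 < icvec A i * icvec A j)
    (hw : wvec A v i < wvec A v j) {x : Fin n} (hattrx : attr A = {x})
    (hjx : icvec A j * icvec A x < 0) :
    ∃ A', AllowStep v A A' ∧ Inv v A' ∧ Dec v A A' := by
  have hU := hInv.1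
  have hxattr : x ∈ attr A := by rw [hattrx]; exact Finset.mem_singleton_self x
  have hx0 : icvec A x ≠ 0 := (mem_attr_iff.mp hxattr).2
  have hj0 : icvec A j ≠ 0 := by rcases sign_cases hsgn with ⟨u1,u2⟩|⟨u1,u2⟩ <;> omega
  have hi0 : icvec A i ≠ 0 := by rcases sign_cases hsgn with ⟨u1,u2⟩|⟨u1,u2⟩ <;> omega
  have hjx' : j ≠ x := by
    intro he
    rw [he] at hjx
    nlinarith [hjx]
  have hxj : x ≠ j := hjx'.symm
  have hjn : j ∉ attr A := by rw [hattrx]; simp [hjx']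
  refine ⟨colAdd A i j, step_allow v A hInv hij hsgn hw, step_Inv v A hInv hij hw, ?_⟩
  rcases lt_or_eq_of_le (cnt_step_le hij hU hsgn) with hc | hc
  · exact Or.inl hc
  have hMx := Mx_step_eq hij hU hsgn hxattr hxj
  have hattr := attr_step_eq hij hU hsgn hxattr hxj hjn
  have hd := dlt_step_eq v hij hU hsgn hxattr hxj hjn
  refine Or.inr ⟨hc, Or.inr ⟨hMx, Or.inr ⟨by rw [hattr], ?_⟩⟩⟩
  rcases lt_or_eq_of_le (c4_step_le v hInv hij hd) with h4 | h4
  · exact Or.inl h4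
  refine Or.inr ⟨h4, ?_⟩
  -- now the sC decrease
  set A' := colAdd A i j with hA'
  have hx' : icvec A' x = icvec A x := icvec_colAdd_ne A i j hij hU x hxj
  have hattr' : attr A' = {x} := by rw [hattr, hattrx]
  have memT : ∀ k, (k ∈ (NZ A).filter (fun k => ¬ ∃ l ∈ attr A, 0 < icvec A k * icvec A l))
      ↔ (icvec A k ≠ 0 ∧ ¬ 0 < icvec A k * icvec A x) := by
    intro k
    rw [Finset.mem_filter, mem_NZ_iff, hattrx]
    simp
  have memT' : ∀ k, (k ∈ (NZ A').filter (fun k => ¬ ∃ l ∈ attr A', 0 < icvec A' k * icvec A' l))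
      ↔ (icvec A' k ≠ 0 ∧ ¬ 0 < icvec A' k * icvec A x) := by
    intro k
    rw [Finset.mem_filter, mem_NZ_iff, hattr']
    simp [hx']
  set T := (NZ A).filter (fun k => ¬ ∃ l ∈ attr A, 0 < icvec A k * icvec A l) with hT
  set T' := (NZ A').filter (fun k => ¬ ∃ l ∈ attr A', 0 < icvec A' k * icvec A' l) with hT'
  have hjT : j ∈ T := (memT j).mpr ⟨hj0, not_lt.mpr hjx.le⟩
  have hmem_ne : ∀ k, k ≠ j → (k ∈ T' ↔ k ∈ T) := by
    intro k hk
    rw [memT k, memT' k, icvec_colAdd_ne A i j hij hU k hk]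
  have hval_ne : ∀ k, k ≠ j → icvec A' k = icvec A k := fun k hk =>
    icvec_colAdd_ne A i j hij hU k hk
  have hjval : icvec A' j = icvec A j - icvec A i := icvec_colAdd_same A i j hij hU
  have herase_sub : T'.erase j ⊆ T.erase j := by
    intro k hk
    obtain ⟨hk1, hk2⟩ := Finset.mem_erase.mp hk
    exact Finset.mem_erase.mpr ⟨hk1, (hmem_ne k hk1).mp hk2⟩
  have hsum_erase : ∑ k ∈ T'.erase j, (icvec A' k).natAbs
      ≤ ∑ k ∈ T.erase j, (icvec A k).natAbs := by
    calc ∑ k ∈ T'.erase j, (icvec A' k).natAbs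
        = ∑ k ∈ T'.erase j, (icvec A k).natAbs :=
          Finset.sum_congr rfl fun k hk => by
            rw [hval_ne k (Finset.mem_erase.mp hk).1]
      _ ≤ ∑ k ∈ T.erase j, (icvec A k).natAbs :=
          Finset.sum_le_sum_of_subset herase_sub
  have hsC_T : sC A = (icvec A j).natAbs + ∑ k ∈ T.erase j, (icvec A k).natAbs := by
    rw [sC, ← hT, ← Finset.add_sum_erase _ _ hjT]
  have hkey := caseC_key (icvec A i) (icvec A j) (icvec A x) hsgn
    (by rw [mul_comm]; exact hjx)
  have hsC'_le : sC A' < sC A := by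
    by_cases hjT' : j ∈ T'
    · have h3 : icvec A' j ≠ 0 ∧ ¬ 0 < icvec A' j * icvec A x := (memT' j).mp hjT'
      have h3' : (icvec A j - icvec A i) ≠ 0 ∧ ¬ 0 < (icvec A j - icvec A i) * icvec A x := by
        rwa [hjval] at h3
      have habs : (icvec A' j).natAbs + 1 ≤ (icvec A j).natAbs := by
        rcases hkey with h | h | h
        · exact absurd h h3'.1
        · exact absurd h h3'.2
        · rw [hjval]; exact h.2.2
      have : sC A' = (icvec A' j).natAbs + ∑ k ∈ T'.erase j, (icvec A' k).natAbs := by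
        rw [sC, ← hT', ← Finset.add_sum_erase _ _ hjT']
      rw [this, hsC_T]
      have := hsum_erase
      omega
    · have hsub2 : T' ⊆ T.erase j := by
        intro k hk
        have hkj : k ≠ j := fun he => hjT' (he ▸ hk)
        exact Finset.mem_erase.mpr ⟨hkj, (hmem_ne k hkj).mp hk⟩
      have : sC A' ≤ ∑ k ∈ T.erase j, (icvec A k).natAbs := by
        rw [sC, ← hT']
        calc ∑ k ∈ T', (icvec A' k).natAbs = ∑ k ∈ T', (icvec A k).natAbs :=
              Finset.sum_congr rfl fun k hk => by
                rw [hval_ne k (fun he => hjT' (he ▸ hk))]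
          _ ≤ _ := Finset.sum_le_sum_of_subset hsub2
      rw [hsC_T]
      have hj1 : 1 ≤ (icvec A j).natAbs := by omega
      omega
  exact hsC'_le

end P4

section P5
open Finset
variable [NeZero n] (v : Fin n → ℝ)
variable {A : Matrix (Fin n) (Fin n) ℤ}

lemma same_sign_of_both_opp {a b x : ℤ} (h1 : a * x < 0) (h2 : b * x < 0) : 0 < a * b := by
  rcases mul_neg_iff.mp h1 with ⟨u1, u2⟩ | ⟨u1, u2⟩ <;>
    rcases mul_neg_iff.mp h2 with ⟨w1, w2⟩ | ⟨w1, w2⟩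
  · exact mul_pos u1 w1
  · omega
  · omega
  · exact mul_pos_of_neg_of_neg u1 w1

lemma reduce (hv : LinearIndependent ℚ v) (hInv : Inv v A) (h3 : 3 ≤ cnt A) :
    ∃ A', AllowStep v A A' ∧ Inv v A' ∧ Dec v A A' := by
  have hU := hInv.1
  have hane : (attr A).Nonempty := attr_nonempty (by omega)
  by_cases Hmate : ∃ y ∈ attr A, ∃ k, k ≠ y ∧ 0 < icvec A k * icvec A y
  · obtain ⟨y, hy, k, hky, hsgn⟩ := Hmate
    rcases lt_or_gt_of_ne (wvec_ne v A hU hv hky) with hw | hw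
    · exact caseA v hInv hky hsgn hw hy
    · by_cases hkattr : k ∈ attr A
      · exact caseA v hInv hky.symm (by rw [mul_comm]; exact hsgn) hw hkattr
      · exact caseB v hInv hky.symm (by rw [mul_comm]; exact hsgn) hw hy hkattr
  · push_neg at Hmate
    obtain ⟨x, hx⟩ := hane
    have hx0 : icvec A x ≠ 0 := (mem_attr_iff.mp hx).2
    have hopp : ∀ z, icvec A z ≠ 0 → z ≠ x → icvec A z * icvec A x < 0 := by
      intro z hz hzx
      have h1 := Hmate x hx z hzx
      have h2 : icvec A z * icvec A x ≠ 0 := mul_ne_zero hz hx0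
      omega
    have hattrx : attr A = {x} := by
      ext y
      rw [Finset.mem_singleton]
      constructor
      · intro hy
        by_contra hyx
        have hy0 : icvec A y ≠ 0 := (mem_attr_iff.mp hy).2
        -- every nonzero z is x or y
        have hsub : NZ A ⊆ {x, y} := by
          intro z hz
          rw [mem_NZ_iff] at hz
          simp only [Finset.mem_insert, Finset.mem_singleton]
          by_contra hzz
          push_neg at hzz
          have hz1 := hopp z hz hzz.1
          have hz2 : icvec A z * icvec A y ≠ 0 := mul_ne_zero hz hy0
          have hz2' := Hmate y hy z hzz.2
          have hz2'' : icvec A z * icvec A y < 0 := by omega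
          have hxz : icvec A x * icvec A z < 0 := by rw [mul_comm]; exact hz1
          have hyz : icvec A y * icvec A z < 0 := by rw [mul_comm]; exact hz2''
          exact absurd (same_sign_of_both_opp hxz hyz)
            (not_lt.mpr (Hmate y hy x (fun he => hyx he.symm)))
        have hc2 : ({x, y} : Finset (Fin n)).card ≤ 2 := by
          refine le_trans (Finset.card_insert_le x {y}) ?_
          rw [Finset.card_singleton]
        have hle : cnt A ≤ ({x, y} : Finset (Fin n)).card := Finset.card_le_card hsub
        have hcc : cnt A = (NZ A).card := rfl
        omega
      · intro h
        rw [h]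
        exact hx
    -- all other nonzero entries lie in the class opposite to x
    have hxNZ : x ∈ NZ A := mem_NZ_iff.mpr hx0
    have hcc : cnt A = (NZ A).card := rfl
    have hcard : 2 ≤ ((NZ A).erase x).card := by
      rw [Finset.card_erase_of_mem hxNZ]
      omega
    obtain ⟨k, hk, l, hl, hkl⟩ := Finset.one_lt_card.mp (by omega : 1 < ((NZ A).erase x).card)
    have hk' := Finset.mem_erase.mp hk
    have hl' := Finset.mem_erase.mp hl
    have hkx := hopp k (mem_NZ_iff.mp hk'.2) hk'.1
    have hlx := hopp l (mem_NZ_iff.mp hl'.2) hl'.1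
    have hsgn : 0 < icvec A k * icvec A l := same_sign_of_both_opp hkx hlx
    rcases lt_or_gt_of_ne (wvec_ne v A hU hv hkl) with hw | hw
    · exact caseC v hInv hkl hsgn hw hattrx hlx
    · exact caseC v hInv hkl.symm (by rw [mul_comm]; exact hsgn) hw hattrx hkx

end P5

section P6
variable [NeZero n] (v : Fin n → ℝ)

def Lt5 : (ℕ × ℕ × ℕ × ℕ × ℕ) → (ℕ × ℕ × ℕ × ℕ × ℕ) → Prop :=
  Prod.Lex (· < ·) (Prod.Lex (· < ·) (Prod.Lex (· < ·) (Prod.Lex (· < ·) (· < ·))))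

lemma lt5_wf : WellFounded (Lt5) :=
  (Nat.lt_wfRel.wf).prod_lex ((Nat.lt_wfRel.wf).prod_lex ((Nat.lt_wfRel.wf).prod_lex
    ((Nat.lt_wfRel.wf).prod_lex (Nat.lt_wfRel.wf))))

noncomputable def meas (A : Matrix (Fin n) (Fin n) ℤ) : ℕ × ℕ × ℕ × ℕ × ℕ :=
  (cnt A, Mx A, (attr A).card, c4 v A, sC A)

lemma dec_lt5 {A A' : Matrix (Fin n) (Fin n) ℤ} (h : Dec v A A') :
    Lt5 (meas v A') (meas v A) := by
  rw [meas, meas]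
  rcases h with h | ⟨e1, h⟩
  · exact Prod.Lex.left _ _ h
  rw [e1]
  apply Prod.Lex.right
  rcases h with h | ⟨e2, h⟩
  · exact Prod.Lex.left _ _ h
  rw [e2]
  apply Prod.Lex.right
  rcases h with h | ⟨e3, h⟩
  · exact Prod.Lex.left _ _ h
  rw [e3]
  apply Prod.Lex.right
  rcases h with h | ⟨e4, h⟩
  · exact Prod.Lex.left _ _ h
  rw [e4]
  exact Prod.Lex.right _ h

lemma reach (hv : LinearIndependent ℚ v) :
    ∀ m : ℕ × ℕ × ℕ × ℕ × ℕ, ∀ A : Matrix (Fin n) (Fin n) ℤ, meas v A = m → Inv v A →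
    ∃ A', Relation.ReflTransGen (AllowStep v) A A' ∧ Inv v A' ∧ cnt A' ≤ 2 := by
  intro m
  induction m using (lt5_wf).induction with
  | _ m IH =>
    intro A hm hInv
    by_cases h2 : cnt A ≤ 2
    · exact ⟨A, Relation.ReflTransGen.refl, hInv, h2⟩
    · obtain ⟨A1, hstep, hInv1, hdec⟩ := reduce v hv hInv (by omega)
      obtain ⟨A', hchain, hInv', hcnt⟩ := IH (meas v A1) (hm ▸ dec_lt5 v hdec) A1 rfl hInv1
      exact ⟨A', Relation.ReflTransGen.head hstep hchain, hInv', hcnt⟩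

lemma pair_cover (S : Finset (Fin n)) (h : S.card ≤ 2) :
    ∃ i j : Fin n, ∀ l, l ≠ i → l ≠ j → l ∉ S := by
  by_cases h0 : S.card = 0
  · exact ⟨0, 0, fun l _ _ hl => by rw [Finset.card_eq_zero.mp h0] at hl; simp at hl⟩
  by_cases h1 : S.card = 1
  · obtain ⟨a, ha⟩ := Finset.card_eq_one.mp h1
    exact ⟨a, a, fun l hl _ hmem => hl (by rw [ha] at hmem; simpa using hmem)⟩
  · have h2 : S.card = 2 := by omega
    obtain ⟨a, b, hab, hS⟩ := Finset.card_eq_two.mp h2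
    refine ⟨a, b, fun l hla hlb hmem => ?_⟩
    rw [hS] at hmem
    simp only [Finset.mem_insert, Finset.mem_singleton] at hmem
    tauto

end P6

end Red

/-- **Lemma 5.** For any `n`-dimensional triple `(A, v, w)` there is a finite sequence of
allowable column additions after which at most two entries of the first column of
`B = A⁻¹` are nonzero. -/
theorem allowable_reduction_first_column {n : ℕ} [NeZero n]
    (A : Matrix (Fin n) (Fin n) ℤ) (v : Fin n → ℝ) (h : IsTriple A v) :
    ∃ A' : Matrix (Fin n) (Fin n) ℤ,
      Relation.ReflTransGen (AllowStep v) A A' ∧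
      ∃ i j : Fin n, ∀ l : Fin n, l ≠ i → l ≠ j → Binv A' l 0 = 0 := by
  have hInv : Red.Inv v A := ⟨h.det_pm, h.w_pos⟩
  obtain ⟨A', hchain, hInv', hcnt⟩ := Red.reach v h.v_indep (Red.meas v A) A rfl hInv
  refine ⟨A', hchain, ?_⟩
  obtain ⟨i, j, hij⟩ := Red.pair_cover (Red.NZ A') hcnt
  refine ⟨i, j, fun l hl1 hl2 => ?_⟩
  have hnz : Red.icvec A' l = 0 := by
    have := hij l hl1 hl2
    rw [Red.mem_NZ_iff] at this
    tauto
  rw [Red.Binv_apply A' hInv'.1 l, hnz]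
  norm_num
end

section
/- Let (A, v, w) be an n-dimensional triple whose columns C_1, …, C_n satisfy C_k = C_1 − e_1 for some k with 1 < k ≤ n, where e_1 = (1, 0, …, 0)ᵗ. Let A_{11} be the (n−1)×(n−1) matrix obtained from A by deleting the first row and first column. Then det(A_{11}) = det(A) = ±1, and the first column of A⁻¹ equals e_1 − e_k (that is, its first entry is 1, its k-th entry is −1, and all other entries are 0). -/
open Matrix

/-- **Lemma 10, first part.** Let `(A, v, w)` be a triple (of dimension `n + 1`) whose
columns satisfy `C_k = C_1 - e_1` for some `k ≠ 1` (here the columns and rows are indexed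
by `Fin (n + 1)`, so the first index is `0` and the hypothesis reads
`A i k = A i 0 - (e_1)_i` for all `i`).  Let `A₁₁ = A.submatrix Fin.succ Fin.succ` be the
matrix obtained from `A` by deleting the first row and first column.  Then
`det A₁₁ = det A` (which is `±1`), and the first column of `A⁻¹` is `e_1 - e_k`. -/
theorem det_minor_and_first_column_of_inverse {n : ℕ}
    (A : Matrix (Fin (n + 1)) (Fin (n + 1)) ℤ) (v : Fin (n + 1) → ℝ)
    (h : IsTriple A v) (k : Fin (n + 1)) (hk : k ≠ 0)
    (hcol : ∀ i, A i k = A i 0 - (if i = 0 then 1 else 0)) :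
    (A.submatrix Fin.succ Fin.succ).det = A.det ∧
    ∀ i, A⁻¹ i 0 = (if i = 0 then (1 : ℤ) else 0) - (if i = k then 1 else 0) := by

  have hdet : IsUnit A.det := by
    rcases h.det_pm with h1 | h1 <;> simp [h1]
  have hAA : A⁻¹ * A = 1 := nonsing_inv_mul A hdet
  set u : Fin (n + 1) → ℤ :=
    fun i => (if i = 0 then (1 : ℤ) else 0) - (if i = k then 1 else 0) with hu_def
  have hmul : A *ᵥ u = fun i => (if i = 0 then (1 : ℤ) else 0) := by
    funext i
    have : A *ᵥ u = fun i => A i 0 - A i k := by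
      funext i
      simp [mulVec, dotProduct, hu_def, mul_sub, mul_ite, Finset.sum_sub_distrib]
    rw [this]
    simp only [hcol i]
    ring
  have hcolinv : ∀ i, A⁻¹ i 0 = u i := by
    have h2 : A⁻¹ *ᵥ (A *ᵥ u) = u := by
      rw [mulVec_mulVec, hAA, one_mulVec]
    intro i
    have := congrFun h2 i
    rw [hmul] at this
    rw [← this]
    simp [mulVec, dotProduct]
  have hinv00 : A⁻¹ 0 0 = 1 := by
    rw [hcolinv 0]
    simp [hu_def, (Ne.symm hk)]
  constructor
  · have hadj : adjugate A 0 0 = (A.submatrix Fin.succ Fin.succ).det := by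
      rw [adjugate_fin_succ_eq_det_submatrix]
      simp [Fin.succAbove_zero]
    have hinv : A⁻¹ = (A.det) • adjugate A := by
      rw [inv_def]
      congr 1
      rcases h.det_pm with h1 | h1 <;>
        simp only [h1, Ring.inverse_one,
          show Ring.inverse (-1 : ℤ) = -1 by
            rw [show ((-1:ℤ)) = ((-1 : ℤˣ) : ℤ) by simp, Ring.inverse_unit]; simp]
    rw [hinv] at hinv00
    simp only [Matrix.smul_apply, smul_eq_mul, hadj] at hinv00
    rcases h.det_pm with h1 | h1 <;> rw [h1] at hinv00 ⊢ <;> linarith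
  · exact hcolinv
end

section
/- Let (A, v, w) be an n-dimensional triple whose columns C_1, …, C_n satisfy C_k = C_1 − e_1 for some k with 1 < k ≤ n, where e_1 = (1, 0, …, 0)ᵗ. Let A_{11} be the (n−1)×(n−1) matrix obtained from A by deleting the first row and first column, let ṽ = (v_2, …, v_n)ᵗ, and let w̃ = (w̃_2, …, w̃_n)ᵗ = A_{11}⁻¹·ṽ. Then w̃_j = w_j for all j ≠ k (2 ≤ j ≤ n), and w̃_k = w_1 + w_k. -/
/-!
Subtracting column `k` from column `1` turns the first column of `A` into `e₁` without changing
the determinant, and expanding along it shows `det A₁₁ = det A = ±1`, so `A₁₁` is unimodular.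
Since rows `2, …, n` of columns `1` and `k` agree, `A w = v` restricted to those rows says that
`A₁₁` sends `(w₂, …, wₙ) + w₁ eₖ` to `ṽ`; hence this vector is `w̃`.
-/

open Matrix

namespace Matrix

variable {R : Type*} [CommRing R] {n : ℕ}

theorem det_eq_det_submatrix_succ_succ_of_col_zero (B : Matrix (Fin (n + 1)) (Fin (n + 1)) R)
    (hB : ∀ i, B i 0 = if i = 0 then 1 else 0) :
    B.det = (B.submatrix Fin.succ Fin.succ).det := by
  simp [det_succ_column_zero B, hB]

theorem det_submatrix_succ_succ_of_col_eq_sub (A : Matrix (Fin (n + 1)) (Fin (n + 1)) R)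
    {k : Fin (n + 1)} (hk : k ≠ 0) (hcol : ∀ i, A i k = A i 0 - if i = 0 then 1 else 0) :
    (A.submatrix Fin.succ Fin.succ).det = A.det := by
  set B := A.updateCol 0 fun i => A i 0 + (-1 : R) • A i k
  have hB : ∀ i, B i 0 = if i = 0 then 1 else 0 := fun i => by simp [B, hcol]
  calc (A.submatrix Fin.succ Fin.succ).det = (B.submatrix Fin.succ Fin.succ).det := by
        simpa using (congrArg det (submatrix_updateCol_succAbove A _ Fin.succ 0)).symm
    _ = B.det := (det_eq_det_submatrix_succ_succ_of_col_zero B hB).symm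
    _ = A.det := det_updateCol_add_smul_self A hk.symm _

theorem submatrix_succ_mulVec_add_single (A : Matrix (Fin (n + 1)) (Fin (n + 1)) R)
    {k : Fin n} (hcol : ∀ i : Fin n, A i.succ k.succ = A i.succ 0) (w : Fin (n + 1) → R) :
    A.submatrix Fin.succ Fin.succ *ᵥ (w ∘ Fin.succ + Pi.single k (w 0)) = (A *ᵥ w) ∘ Fin.succ := by
  ext i
  simp [mulVec, dotProduct, Fin.sum_univ_succ, mul_add, Finset.sum_add_distrib, Pi.single_apply,
    hcol]
  ring

end Matrix

theorem isUnit_det_map_intCast {m R : Type*} [Fintype m] [DecidableEq m] [CommRing R]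
    {A : Matrix m m ℤ} (hA : IsUnit A.det) : IsUnit (A.map (Int.cast : ℤ → R)).det := by
  rw [show (A.map Int.cast).det = (A.det : R) from ((Int.castRingHom R).map_det A).symm]
  exact hA.map (Int.castRingHom R)

theorem mulVec_wvec {n : ℕ} {A : Matrix (Fin n) (Fin n) ℤ} (hA : IsUnit A.det) (v : Fin n → ℝ) :
    A.map (Int.cast : ℤ → ℝ) *ᵥ wvec A v = v := by
  rw [wvec, mulVec_mulVec, mul_nonsing_inv _ (isUnit_det_map_intCast hA), one_mulVec]

theorem wvec_eq_of_mulVec_eq {n : ℕ} {A : Matrix (Fin n) (Fin n) ℤ} (hA : IsUnit A.det)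
    {v x : Fin n → ℝ} (hx : A.map (Int.cast : ℤ → ℝ) *ᵥ x = v) : wvec A v = x := by
  rw [wvec, ← hx, mulVec_mulVec, nonsing_inv_mul _ (isUnit_det_map_intCast hA), one_mulVec]

/-- **Lemma 10, second part.** Let `(A, v, w)` be a triple (of dimension `n + 1`) whose
columns satisfy `C_k = C_1 - e_1` for some `k ≠ 1` (here the columns and rows are indexed
by `Fin (n + 1)`, so the first index is `0` and the hypothesis reads
`A i k = A i 0 - (e_1)_i` for all `i`).  Let `A₁₁ = A.submatrix Fin.succ Fin.succ` be the
matrix obtained from `A` by deleting the first row and first column, let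
`ṽ = v ∘ Fin.succ` be obtained from `v` by deleting the first entry, and let
`w̃ = A₁₁⁻¹ · ṽ` (indexed by `Fin n`, the entry `w̃ i` corresponding to the index
`i.succ` of `w`).  Then `w̃_j = w_j` for all `j ≠ k`, and `w̃_k = w_1 + w_k`. -/
theorem wtilde_of_minor {n : ℕ}
    (A : Matrix (Fin (n + 1)) (Fin (n + 1)) ℤ) (v : Fin (n + 1) → ℝ)
    (h : IsTriple A v) (k : Fin (n + 1)) (hk : k ≠ 0)
    (hcol : ∀ i, A i k = A i 0 - (if i = 0 then 1 else 0)) :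
    (∀ i : Fin n, i.succ ≠ k →
        wvec (A.submatrix Fin.succ Fin.succ) (v ∘ Fin.succ) i = wvec A v i.succ) ∧
    (∀ i : Fin n, i.succ = k →
        wvec (A.submatrix Fin.succ Fin.succ) (v ∘ Fin.succ) i = wvec A v 0 + wvec A v k) := by
  obtain ⟨k, rfl⟩ := Fin.exists_succ_eq.mpr hk
  have hA : IsUnit A.det := Int.isUnit_iff.mpr h.det_pm
  have hA₁₁ : IsUnit (A.submatrix Fin.succ Fin.succ).det := by
    rwa [det_submatrix_succ_succ_of_col_eq_sub A hk hcol]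
  have hcol' : ∀ i : Fin n, A.map (Int.cast : ℤ → ℝ) i.succ k.succ = A.map Int.cast i.succ 0 :=
    by simp [hcol]
  have hwtilde : wvec (A.submatrix Fin.succ Fin.succ) (v ∘ Fin.succ) =
      wvec A v ∘ Fin.succ + Pi.single k (wvec A v 0) := by
    apply wvec_eq_of_mulVec_eq hA₁₁
    rw [← submatrix_map, submatrix_succ_mulVec_add_single _ hcol', mulVec_wvec hA]
  refine ⟨fun i hi => ?_, fun i hi => ?_⟩
  · simp [hwtilde, (Fin.succ_injective _).ne_iff.mp hi]
  · simp [hwtilde, Fin.succ_injective _ hi, add_comm]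
end

section
/- Let (A, v, w) be an n-dimensional triple with n ≥ 2, and fix indices i ≠ j. Then exactly one of the column additions C_{ij} and C_{ji} is permissible for (A, v, w). Moreover, if C_{ij} is permissible, then there exists a positive integer m such that after performing C_{ij} exactly m times, the column addition C_{ji} becomes permissible for the resulting triple. -/
open Matrix

lemma colAdd_eq_mul {n : ℕ} (A : Matrix (Fin n) (Fin n) ℤ) (i j : Fin n) :
    colAdd A i j = A * (1 + Matrix.single j i 1) := by
  ext k l
  rw [Matrix.mul_add, Matrix.mul_one]
  by_cases hl : l = i
  · subst hl
    simp [colAdd, updateCol_apply, Matrix.add_apply, mul_apply, Matrix.single, of_apply]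
  · simp [colAdd, updateCol_apply, hl, Matrix.add_apply, mul_apply, Matrix.single, of_apply,
      Ne.symm hl]

lemma wvec_colAdd {n : ℕ} (A : Matrix (Fin n) (Fin n) ℤ) (v : Fin n → ℝ) {i j : Fin n}
    (hij : i ≠ j) (k : Fin n) :
    wvec (colAdd A i j) v k = wvec A v k - if k = j then wvec A v i else 0 := by
  have hmap : (colAdd A i j).map (Int.cast : ℤ → ℝ)
      = A.map (Int.cast : ℤ → ℝ) * (1 + Matrix.single j i (1:ℝ)) := by
    rw [colAdd_eq_mul]
    rw [show (Int.cast : ℤ → ℝ) = ((Int.castRingHom ℝ) : ℤ → ℝ) from rfl, Matrix.map_mul]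
    congr 1
    ext a b
    simp [Matrix.single, Matrix.add_apply, Matrix.one_apply, of_apply]
  have hinv : (1 + Matrix.single j i (1:ℝ))⁻¹ = 1 - Matrix.single j i (1:ℝ) := by
    apply Matrix.inv_eq_right_inv
    rw [Matrix.mul_sub, Matrix.mul_one, Matrix.add_mul, Matrix.one_mul,
      Matrix.single_mul_single_of_ne (c := (1:ℝ)) j i j hij 1]
    simp
  have : wvec (colAdd A i j) v = (1 - Matrix.single j i (1:ℝ)) *ᵥ wvec A v := by
    rw [wvec, hmap, Matrix.mul_inv_rev, hinv, ← Matrix.mulVec_mulVec, wvec]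
  rw [this, Matrix.sub_mulVec, Matrix.one_mulVec]
  congr 1
  simp [mulVec, dotProduct, Matrix.single, of_apply, ite_and]
  by_cases hk : k = j
  · simp [hk]
  · simp [hk, Ne.symm hk]

lemma wvec_iter {n : ℕ} (A : Matrix (Fin n) (Fin n) ℤ) (v : Fin n → ℝ) {i j : Fin n}
    (hij : i ≠ j) (t : ℕ) :
    wvec ((fun M => colAdd M i j)^[t] A) v i = wvec A v i ∧
    wvec ((fun M => colAdd M i j)^[t] A) v j = wvec A v j - t * wvec A v i := by
  induction t with
  | zero => simp
  | succ t ih =>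
    rw [Function.iterate_succ_apply']
    constructor
    · rw [wvec_colAdd _ _ hij, if_neg hij, ih.1, sub_zero]
    · rw [wvec_colAdd _ _ hij, if_pos rfl, ih.1, ih.2]
      push_cast
      ring

lemma wvec_ne_int_mul {n : ℕ} {A : Matrix (Fin n) (Fin n) ℤ} {v : Fin n → ℝ}
    (h : IsTriple A v) {i j : Fin n} (hij : i ≠ j) (c : ℤ) :
    wvec A v j ≠ (c : ℝ) * wvec A v i := by
  intro heq
  have hdet : IsUnit A.det := by
    rcases h.det_pm with h1 | h1 <;> rw [h1]
    · exact isUnit_one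
    · exact isUnit_one.neg
  set B := A⁻¹ with hB
  have hBA : B * A = 1 := Matrix.nonsing_inv_mul A hdet
  have hAB : A * B = 1 := Matrix.mul_nonsing_inv A hdet
  have hmapinv : (A.map (Int.cast : ℤ → ℝ))⁻¹ = B.map (Int.cast : ℤ → ℝ) := by
    apply Matrix.inv_eq_left_inv
    rw [show (Int.cast : ℤ → ℝ) = ((Int.castRingHom ℝ) : ℤ → ℝ) from rfl, ← Matrix.map_mul,
      hBA]
    simp
  have hw : ∀ k, wvec A v k = ∑ l, (B k l : ℝ) * v l := by
    intro k
    rw [wvec, hmapinv]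
    simp [mulVec, dotProduct, Matrix.map_apply]
  -- get rational linear relation
  have hsum : ∑ l, (((B j l : ℚ) - c * B i l) • v l) = 0 := by
    have : ∑ l, (B j l : ℝ) * v l = (c:ℝ) * ∑ l, (B i l : ℝ) * v l := by
      rw [← hw, ← hw, heq]
    rw [Finset.mul_sum] at this
    have h2 : ∑ l, ((B j l : ℝ) * v l - (c:ℝ) * ((B i l : ℝ) * v l)) = 0 := by
      rw [Finset.sum_sub_distrib, this, sub_self]
    rw [← h2]
    apply Finset.sum_congr rfl
    intro l _
    rw [Rat.smul_def]
    push_cast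
    ring
  have hg := Fintype.linearIndependent_iff.mp h.v_indep _ hsum
  have hrow : ∀ l, B j l = c * B i l := by
    intro l
    have := hg l
    have : (B j l : ℚ) = c * B i l := by linarith [this]
    exact_mod_cast this
  -- contradiction with B * A = 1
  have h1 : (B * A) j j = 1 := by rw [hBA]; simp
  have h0 : (B * A) i j = 0 := by rw [hBA]; simp [Matrix.one_apply, hij]
  rw [mul_apply] at h1 h0
  have : ∑ l, B j l * A l j = c * ∑ l, B i l * A l j := by
    rw [Finset.mul_sum]
    exact Finset.sum_congr rfl fun l _ => by rw [hrow l]; ring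
  rw [h1, h0, mul_zero] at this
  exact one_ne_zero this


/-- **Remark 2.** Let `(A, v, w)` be an `n`-dimensional triple (`n ≥ 2`), and fix `i ≠ j`.
Exactly one of the column additions `C_{ij}`, `C_{ji}` is permissible (`C_{ij}` is
permissible when `w j - w i > 0`).  Moreover, if `C_{ij}` is permissible, then there is a
positive integer `m` such that each of the first `m` performances of `C_{ij}` is
permissible for the triple at hand, and after performing `C_{ij}` exactly `m` times the
column addition `C_{ji}` becomes permissible for the resulting triple. -/
theorem permissible_dichotomy_and_switch {n : ℕ} (hn : 2 ≤ n)
    (A : Matrix (Fin n) (Fin n) ℤ) (v : Fin n → ℝ) (h : IsTriple A v)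
    (i j : Fin n) (hij : i ≠ j) :
    Xor' (0 < wvec A v j - wvec A v i) (0 < wvec A v i - wvec A v j) ∧
    (0 < wvec A v j - wvec A v i →
      ∃ m : ℕ, 0 < m ∧
        (∀ t < m, 0 < wvec ((fun M => colAdd M i j)^[t] A) v j
                    - wvec ((fun M => colAdd M i j)^[t] A) v i) ∧
        0 < wvec ((fun M => colAdd M i j)^[m] A) v i
              - wvec ((fun M => colAdd M i j)^[m] A) v j) := by
  set wi := wvec A v i with hwi
  set wj := wvec A v j with hwj
  have hne : wj ≠ wi := by
    have := wvec_ne_int_mul h hij 1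
    simpa using this
  constructor
  · rcases lt_or_gt_of_ne hne with hlt | hlt
    · exact Or.inr ⟨by linarith, by linarith⟩
    · exact Or.inl ⟨by linarith, by linarith⟩
  · intro hperm
    have hwipos : 0 < wi := h.w_pos i
    set x : ℝ := wj / wi with hx
    have hx1 : 1 < x := (one_lt_div hwipos).mpr (by linarith)
    set m : ℕ := (⌊x⌋).toNat with hm
    have hfloor1 : (1:ℤ) ≤ ⌊x⌋ := by
      rw [Int.le_floor]
      push_cast
      exact hx1.le
    have hmz : (m : ℤ) = ⌊x⌋ := Int.toNat_of_nonneg (by linarith)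
    have hmx : (m : ℝ) < x := by
      have hle : ((⌊x⌋ : ℝ)) ≤ x := Int.floor_le x
      have hne' : x ≠ ((⌊x⌋ : ℝ)) := by
        intro hxe
        apply wvec_ne_int_mul h hij ⌊x⌋
        rw [← hwj, ← hwi]
        have : wj = x * wi := by rw [hx, div_mul_cancel₀ _ hwipos.ne']
        rw [this]
        exact congrArg (fun y => y * wi) hxe
      have : ((m:ℤ) : ℝ) = ((⌊x⌋:ℝ)) := by exact_mod_cast congrArg (Int.cast : ℤ → ℝ) hmz
      push_cast at this
      rw [this]
      exact lt_of_le_of_ne hle (Ne.symm hne')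
    have hxm : x < (m : ℝ) + 1 := by
      have := Int.lt_floor_add_one x
      have h2 : ((m:ℝ)) = ((⌊x⌋:ℝ)) := by exact_mod_cast hmz
      rw [h2]; exact this
    have hmpos : 0 < m := by
      have : (0:ℤ) < (m:ℤ) := by omega
      exact_mod_cast this
    refine ⟨m, hmpos, ?_, ?_⟩
    · intro t ht
      have hi := (wvec_iter A v hij t).1
      have hj := (wvec_iter A v hij t).2
      rw [hi, hj, ← hwi, ← hwj]
      have ht1 : ((t:ℝ) + 1) ≤ (m:ℝ) := by exact_mod_cast Nat.succ_le_of_lt ht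
      have : ((t:ℝ) + 1) * wi < x * wi := by
        apply mul_lt_mul_of_pos_right _ hwipos
        linarith
      have hxw : x * wi = wj := by rw [hx, div_mul_cancel₀ _ hwipos.ne']
      rw [hxw] at this
      linarith
    · have hi := (wvec_iter A v hij m).1
      have hj := (wvec_iter A v hij m).2
      rw [hi, hj, ← hwi, ← hwj]
      have : x * wi < ((m:ℝ) + 1) * wi := by
        apply mul_lt_mul_of_pos_right hxm hwipos
      have hxw : x * wi = wj := by rw [hx, div_mul_cancel₀ _ hwipos.ne']
      rw [hxw] at this
      linarith
end

section
/- Let (A, v, w) be an n-dimensional triple and suppose the column addition C_{ij} is *-allowable for (A, v, w), transforming it into (A(1), v, w(1)). Let B = A⁻¹ = (b_{kl}), B(1) = A(1)⁻¹ = (b_{kl}(1)), β = max_k |b_{k1}|, and β(1) = max_k |b_{k1}(1)|. Then b_{j1}(1) = b_{j1} − b_{i1}, b_{k1}(1) = b_{k1} for all k ≠ j, and β(1) ≤ β. -/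
open Matrix

/-- `β = max_k |b_{k1}|`, where `B = A⁻¹`. -/
noncomputable def betaInv {n : ℕ} [NeZero n] (A : Matrix (Fin n) (Fin n) ℤ) : ℝ :=
  Finset.univ.sup' Finset.univ_nonempty fun k => |Binv A k 0|

/-- **Remark 3 (1).** Suppose the column addition `C_{ij}` is `*`-allowable for the
`n`-dimensional triple `(A, v, w)` (i.e. it is permissible, `w j - w i > 0`, and either
`b_{i1} · b_{j1} = 0` or `b_{i1}`, `b_{j1}` are nonzero of the same sign; equivalently it
is permissible and `0 ≤ b_{i1} · b_{j1}`), and let `A(1) = colAdd A i j` be the resulting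
matrix, `B(1) = A(1)⁻¹`.  Then `b_{j1}(1) = b_{j1} - b_{i1}`, `b_{k1}(1) = b_{k1}` for all
`k ≠ j`, and `β(1) = max_k |b_{k1}(1)| ≤ max_k |b_{k1}| = β`. -/
theorem star_allowable_beta_nonincreasing {n : ℕ} [NeZero n]
    (A : Matrix (Fin n) (Fin n) ℤ) (v : Fin n → ℝ) (h : IsTriple A v)
    (i j : Fin n) (hij : i ≠ j) (hperm : 0 < wvec A v j - wvec A v i)
    (hstar : 0 ≤ Binv A i 0 * Binv A j 0) :
    Binv (colAdd A i j) j 0 = Binv A j 0 - Binv A i 0 ∧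
    (∀ k : Fin n, k ≠ j → Binv (colAdd A i j) k 0 = Binv A k 0) ∧
    betaInv (colAdd A i j) ≤ betaInv A := by
  set E : Matrix (Fin n) (Fin n) ℝ := Matrix.single j i (1 : ℝ) with hE
  have hE2 : E * E = 0 := Matrix.single_mul_single_of_ne _ _ _ _ hij _
  have hfac : (colAdd A i j).map (Int.cast : ℤ → ℝ)
      = (A.map (Int.cast : ℤ → ℝ)) * (1 + E) := by
    ext k l
    rw [Matrix.mul_add, Matrix.add_apply, Matrix.mul_one]
    by_cases hl : l = i
    · subst hl
      simp [hE, colAdd, Matrix.updateCol_apply, Matrix.map_apply]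
    · simp [hE, colAdd, Matrix.updateCol_apply, hl, Matrix.map_apply,
        Matrix.mul_single_apply_of_ne _ _ _ _ _ hl _]
  have hinvE : (1 + E)⁻¹ = 1 - E := by
    apply Matrix.inv_eq_left_inv
    rw [Matrix.sub_mul, Matrix.one_mul, Matrix.mul_add, Matrix.mul_one, hE2,
      add_zero, add_sub_cancel_right]
  have hB1 : Binv (colAdd A i j) = (1 - E) * Binv A := by
    rw [Binv, hfac, Matrix.mul_inv_rev, hinvE, Binv]
  have hjj : Binv (colAdd A i j) j 0 = Binv A j 0 - Binv A i 0 := by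
    rw [hB1, Matrix.sub_mul, Matrix.one_mul, Matrix.sub_apply, hE,
      Matrix.single_mul_apply_same, one_mul]
  have hkk : ∀ k : Fin n, k ≠ j → Binv (colAdd A i j) k 0 = Binv A k 0 := by
    intro k hk
    rw [hB1, Matrix.sub_mul, Matrix.one_mul, Matrix.sub_apply, hE,
      Matrix.single_mul_apply_of_ne _ _ _ _ _ hk _, sub_zero]
  refine ⟨hjj, hkk, ?_⟩
  apply Finset.sup'_le
  intro k _
  by_cases hk : k = j
  · rw [hk, hjj]
    have h1 : |Binv A i 0| ≤ betaInv A :=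
      Finset.le_sup' (fun k => |Binv A k 0|) (Finset.mem_univ i)
    have h2 : |Binv A j 0| ≤ betaInv A :=
      Finset.le_sup' (fun k => |Binv A k 0|) (Finset.mem_univ j)
    rcases abs_cases (Binv A j 0 - Binv A i 0) with ⟨he, _⟩ | ⟨he, _⟩ <;>
      rcases abs_cases (Binv A i 0) with ⟨h3, _⟩ | ⟨h3, _⟩ <;>
      rcases abs_cases (Binv A j 0) with ⟨h4, _⟩ | ⟨h4, _⟩ <;>
      nlinarith
  · rw [hkk k hk]
    exact Finset.le_sup' (fun k => |Binv A k 0|) (Finset.mem_univ k)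
end

section
/- Let (A, v, w) be an n-dimensional triple and fix indices i ≠ j. Then there is no infinite sequence of triples (A, v, w) = (A(0), v, w(0)) → (A(1), v, w(1)) → (A(2), v, w(2)) → … in which each step is obtained from the previous triple by performing an allowable column addition C_{ij} or an allowable column addition C_{ji}. Moreover, if at least one of b_{i1}, b_{j1} is nonzero (where B = A⁻¹ = (b_{kl})), then there is no infinite sequence of triples in which each step performs a *-allowable C_{ij} or a *-allowable C_{ji}. -/
open Matrix

/-- The column addition `C_{ij}` is allowable for the triple determined by the current
matrix `A` and the fixed vector `v`: it is permissible (`w j - w i > 0`) and `b_{i1}`,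
`b_{j1}` are both nonzero of the same sign (`b_{i1} · b_{j1} > 0`), where `B = A⁻¹`. -/
def IsAllowable {n : ℕ} [NeZero n] (v : Fin n → ℝ) (A : Matrix (Fin n) (Fin n) ℤ)
    (i j : Fin n) : Prop :=
  i ≠ j ∧ 0 < wvec A v j - wvec A v i ∧ 0 < Binv A i 0 * Binv A j 0

/-- The column addition `C_{ij}` is `*`-allowable: it is permissible (`w j - w i > 0`) and
either `b_{i1} · b_{j1} = 0` or it is allowable; equivalently `0 ≤ b_{i1} · b_{j1}`. -/
def IsStarAllowable {n : ℕ} [NeZero n] (v : Fin n → ℝ) (A : Matrix (Fin n) (Fin n) ℤ)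
    (i j : Fin n) : Prop :=
  i ≠ j ∧ 0 < wvec A v j - wvec A v i ∧ 0 ≤ Binv A i 0 * Binv A j 0

namespace NoInfSeqAux

variable {n : ℕ}

lemma det_colAdd (A : Matrix (Fin n) (Fin n) ℤ) {i j : Fin n} (hij : i ≠ j) :
    (colAdd A i j).det = A.det :=
  Matrix.det_updateCol_add_self A hij

lemma colAdd_map (A : Matrix (Fin n) (Fin n) ℤ) (i j : Fin n) :
    (colAdd A i j).map (Int.cast : ℤ → ℝ)
      = (A.map (Int.cast : ℤ → ℝ)) * (1 + single j i (1:ℝ)) := by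
  ext k l
  rw [mul_add, mul_one, Matrix.add_apply]
  by_cases hl : l = i
  · subst hl
    rw [Matrix.mul_single_apply_same, mul_one]
    simp [colAdd, Matrix.map_apply]
  · rw [Matrix.mul_single_apply_of_ne _ _ _ _ _ hl, add_zero]
    simp [colAdd, Matrix.map_apply, Matrix.updateCol_ne hl]

lemma E_inv {i j : Fin n} (hij : i ≠ j) :
    (1 + single j i (1:ℝ))⁻¹ = 1 - single j i 1 := by
  apply Matrix.inv_eq_right_inv
  have hS : single j i (1:ℝ) * single j i 1 = 0 :=
    Matrix.single_mul_single_of_ne _ _ _ _ hij _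
  rw [add_mul, one_mul, mul_sub, mul_one, hS, sub_zero, sub_add_cancel]

lemma Binv_colAdd (A : Matrix (Fin n) (Fin n) ℤ) {i j : Fin n} (hij : i ≠ j) :
    Binv (colAdd A i j) = (1 - single j i (1:ℝ)) * Binv A := by
  unfold Binv
  rw [colAdd_map, Matrix.mul_inv_rev, E_inv hij]

lemma Binv_colAdd_apply (A : Matrix (Fin n) (Fin n) ℤ) {i j : Fin n} (hij : i ≠ j)
    (k l : Fin n) :
    Binv (colAdd A i j) k l = Binv A k l - (if k = j then Binv A i l else 0) := by
  rw [Binv_colAdd A hij, sub_mul, one_mul, Matrix.sub_apply]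
  congr 1
  by_cases hk : k = j
  · subst hk
    rw [Matrix.single_mul_apply_same, one_mul, if_pos rfl]
  · rw [Matrix.single_mul_apply_of_ne _ _ _ _ _ hk, if_neg hk]

lemma wvec_colAdd (A : Matrix (Fin n) (Fin n) ℤ) (v : Fin n → ℝ) {i j : Fin n}
    (hij : i ≠ j) (k : Fin n) :
    wvec (colAdd A i j) v k = wvec A v k - (if k = j then wvec A v i else 0) := by
  have h1 : wvec (colAdd A i j) v = Binv (colAdd A i j) *ᵥ v := rfl
  have h2 : wvec A v = Binv A *ᵥ v := rfl
  rw [h1, h2, Binv_colAdd A hij, sub_mul, one_mul, Matrix.sub_mulVec, Pi.sub_apply,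
    ← Matrix.mulVec_mulVec]
  congr 1
  by_cases hk : k = j
  · subst hk
    simp [Matrix.mulVec, dotProduct, Matrix.single, Finset.sum_ite_eq]
  · simp [Matrix.mulVec, dotProduct, Matrix.single, Ne.symm hk, hk]

lemma Binv_eq_intCast (A : Matrix (Fin n) (Fin n) ℤ) (hd : A.det = 1 ∨ A.det = -1)
    (k l : Fin n) :
    Binv A k l = ((A.det * A.adjugate k l : ℤ) : ℝ) := by
  have hdet : ((A.map (Int.cast : ℤ → ℝ))).det = ((A.det : ℤ) : ℝ) :=
    ((Int.castRingHom ℝ).map_det A).symm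
  have hadj : (A.map (Int.cast : ℤ → ℝ)).adjugate = (A.adjugate).map (Int.cast : ℤ → ℝ) :=
    ((Int.castRingHom ℝ).map_adjugate A).symm
  unfold Binv
  rw [Matrix.inv_def, hdet, hadj]
  rcases hd with hd | hd <;>
    simp [hd, Ring.inverse_one, Matrix.smul_apply, Matrix.map_apply, inv_neg_one]

/-- Key integer lemma for the descent. -/
lemma key (a b : ℤ) (h1 : 0 ≤ a * b) (h2 : 0 ≤ a * (b - a)) :
    ((b - a).natAbs + a.natAbs ≤ b.natAbs + a.natAbs) ∧
      ((b - a).natAbs + a.natAbs = b.natAbs + a.natAbs → a = 0) := by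
  rcases lt_trichotomy a 0 with ha | ha | ha
  · have hb : b ≤ 0 := by nlinarith
    have hba : b - a ≤ 0 := by nlinarith
    omega
  · subst ha; omega
  · have hb : 0 ≤ b := by nlinarith
    have hba : 0 ≤ b - a := by nlinarith
    omega

/-- Archimedean contradiction: `x` decreases by the fixed positive amount `y 0` each step
while staying above `y 0`. -/
lemma phase2 (x y : ℕ → ℝ) (hy0 : 0 < y 0)
    (hstep : ∀ k, y (k + 1) = y k ∧ x (k + 1) = x k - y k ∧ 0 < x k - y k) : False := by
  have hyc : ∀ k, y k = y 0 := by
    intro k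
    induction k with
    | zero => rfl
    | succ k ih => rw [(hstep k).1, ih]
  have hx : ∀ k, x k = x 0 - k * y 0 := by
    intro k
    induction k with
    | zero => simp
    | succ k ih => rw [(hstep k).2.1, ih, hyc k]; push_cast; ring
  obtain ⟨k, hk⟩ := exists_nat_gt (x 0 / y 0)
  have h1 := (hstep k).2.2
  rw [hx k, hyc k] at h1
  rw [div_lt_iff₀ hy0] at hk
  linarith

lemma star_core {n : ℕ} [NeZero n] (v : Fin n → ℝ) {i j : Fin n} (hij : i ≠ j)
    (f : ℕ → Matrix (Fin n) (Fin n) ℤ)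
    (hdet0 : (f 0).det = 1 ∨ (f 0).det = -1)
    (hwi0 : 0 < wvec (f 0) v i) (hwj0 : 0 < wvec (f 0) v j)
    (hstep : ∀ t : ℕ, (IsStarAllowable v (f t) i j ∧ f (t + 1) = colAdd (f t) i j) ∨
                 (IsStarAllowable v (f t) j i ∧ f (t + 1) = colAdd (f t) j i))
    (hnz : Binv (f 0) i 0 ≠ 0 ∨ Binv (f 0) j 0 ≠ 0) : False := by
  have hdet : ∀ t, (f t).det = 1 ∨ (f t).det = -1 := by
    intro t
    induction t with
    | zero => exact hdet0
    | succ t ih =>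
        rcases hstep t with ⟨_, he⟩ | ⟨_, he⟩
        · rw [he, det_colAdd _ hij]; exact ih
        · rw [he, det_colAdd _ hij.symm]; exact ih
  set p : ℕ → ℤ := fun t => (f t).det * (f t).adjugate i 0 with hp_def
  set q : ℕ → ℤ := fun t => (f t).det * (f t).adjugate j 0 with hq_def
  have hp : ∀ t, Binv (f t) i 0 = ((p t : ℤ) : ℝ) := fun t => Binv_eq_intCast (f t) (hdet t) i 0
  have hq : ∀ t, Binv (f t) j 0 = ((q t : ℤ) : ℝ) := fun t => Binv_eq_intCast (f t) (hdet t) j 0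
  set wi : ℕ → ℝ := fun t => wvec (f t) v i with hwi_def
  set wj : ℕ → ℝ := fun t => wvec (f t) v j with hwj_def
  have hstar : ∀ t, 0 ≤ p t * q t := by
    intro t
    have hr : (0:ℝ) ≤ (p t : ℝ) * (q t : ℝ) := by
      rcases hstep t with ⟨⟨_, _, hs⟩, _⟩ | ⟨⟨_, _, hs⟩, _⟩
      · rw [← hp t, ← hq t]; exact hs
      · rw [← hp t, ← hq t, mul_comm]; exact hs
    exact_mod_cast hr
  have hfact : ∀ t,
      (p (t+1) = p t ∧ q (t+1) = q t - p t ∧ wi (t+1) = wi t ∧ wj (t+1) = wj t - wi t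
        ∧ 0 < wj t - wi t)
    ∨ (q (t+1) = q t ∧ p (t+1) = p t - q t ∧ wj (t+1) = wj t ∧ wi (t+1) = wi t - wj t
        ∧ 0 < wi t - wj t) := by
    intro t
    rcases hstep t with ⟨⟨_, hperm, _⟩, he⟩ | ⟨⟨_, hperm, _⟩, he⟩
    · left
      have h1 : Binv (f (t+1)) i 0 = Binv (f t) i 0 := by
        rw [he, Binv_colAdd_apply _ hij, if_neg hij, sub_zero]
      have h2 : Binv (f (t+1)) j 0 = Binv (f t) j 0 - Binv (f t) i 0 := by
        rw [he, Binv_colAdd_apply _ hij, if_pos rfl]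
      have h3 : wi (t+1) = wi t := by
        show wvec (f (t+1)) v i = wvec (f t) v i
        rw [he, wvec_colAdd _ _ hij, if_neg hij, sub_zero]
      have h4 : wj (t+1) = wj t - wi t := by
        show wvec (f (t+1)) v j = wvec (f t) v j - wvec (f t) v i
        rw [he, wvec_colAdd _ _ hij, if_pos rfl]
      rw [hp, hp] at h1
      rw [hq, hq, hp] at h2
      exact ⟨by exact_mod_cast h1, by exact_mod_cast h2, h3, h4, hperm⟩
    · right
      have h1 : Binv (f (t+1)) j 0 = Binv (f t) j 0 := by
        rw [he, Binv_colAdd_apply _ hij.symm, if_neg hij.symm, sub_zero]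
      have h2 : Binv (f (t+1)) i 0 = Binv (f t) i 0 - Binv (f t) j 0 := by
        rw [he, Binv_colAdd_apply _ hij.symm, if_pos rfl]
      have h3 : wj (t+1) = wj t := by
        show wvec (f (t+1)) v j = wvec (f t) v j
        rw [he, wvec_colAdd _ _ hij.symm, if_neg hij.symm, sub_zero]
      have h4 : wi (t+1) = wi t - wj t := by
        show wvec (f (t+1)) v i = wvec (f t) v i - wvec (f t) v j
        rw [he, wvec_colAdd _ _ hij.symm, if_pos rfl]
      rw [hq, hq] at h1
      rw [hp, hp, hq] at h2
      exact ⟨by exact_mod_cast h1, by exact_mod_cast h2, h3, h4, hperm⟩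
  have hwpos : ∀ t, 0 < wi t ∧ 0 < wj t := by
    intro t
    induction t with
    | zero => exact ⟨hwi0, hwj0⟩
    | succ t ih =>
        rcases hfact t with ⟨_, _, h3, h4, h5⟩ | ⟨_, _, h3, h4, h5⟩
        · exact ⟨h3 ▸ ih.1, h4 ▸ h5⟩
        · exact ⟨h4 ▸ h5, h3 ▸ ih.2⟩
  have hnzt : ∀ t, p t ≠ 0 ∨ q t ≠ 0 := by
    intro t
    induction t with
    | zero =>
        rcases hnz with hz | hz
        · left
          intro h0
          exact hz (by rw [hp 0, h0]; norm_num)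
        · right
          intro h0
          exact hz (by rw [hq 0, h0]; norm_num)
    | succ t ih =>
        rcases hfact t with ⟨h1, h2, _⟩ | ⟨h1, h2, _⟩ <;> omega
  let m : ℕ → ℕ := fun t => (p t).natAbs + (q t).natAbs
  have hm : ∀ t, m t = (p t).natAbs + (q t).natAbs := fun _ => rfl
  have hmono : ∀ t, m (t+1) ≤ m t ∧ (m (t+1) = m t →
      (p (t+1) = p t ∧ q (t+1) = q t ∧
        ((p t = 0 ∧ wi (t+1) = wi t ∧ wj (t+1) = wj t - wi t ∧ 0 < wj t - wi t) ∨
         (q t = 0 ∧ wj (t+1) = wj t ∧ wi (t+1) = wi t - wj t ∧ 0 < wi t - wj t)))) := by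
    intro t
    rcases hfact t with ⟨h1, h2, h3, h4, h5⟩ | ⟨h1, h2, h3, h4, h5⟩
    · have hs2 : 0 ≤ p t * (q t - p t) := by
        have hs := hstar (t+1); rw [h1, h2] at hs; exact hs
      obtain ⟨hk1, hk2⟩ := key (p t) (q t) (hstar t) hs2
      rw [hm, hm]
      constructor
      · omega
      · intro hme
        have hp0 : p t = 0 := hk2 (by omega)
        exact ⟨h1, by omega, Or.inl ⟨hp0, h3, h4, h5⟩⟩
    · have hs2 : 0 ≤ q t * (p t - q t) := by
        have hs := hstar (t+1); rw [h1, h2, mul_comm] at hs; exact hs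
      have hs1 : 0 ≤ q t * p t := by rw [mul_comm]; exact hstar t
      obtain ⟨hk1, hk2⟩ := key (q t) (p t) hs1 hs2
      rw [hm, hm]
      constructor
      · omega
      · intro hme
        have hq0 : q t = 0 := hk2 (by omega)
        exact ⟨by omega, h1, Or.inr ⟨hq0, h3, h4, h5⟩⟩
  obtain ⟨T, hT⟩ : ∃ T, m T = sInf (Set.range m) := Nat.sInf_mem (Set.range_nonempty m)
  have hTmin : ∀ t, m T ≤ m t := fun t => hT ▸ Nat.sInf_le ⟨t, rfl⟩
  have hconstk : ∀ k, m (T + k) = m T := by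
    intro k
    induction k with
    | zero => rfl
    | succ k ih =>
        show m (T + k + 1) = m T
        have h1 := (hmono (T + k)).1
        have h2 := hTmin (T + k + 1)
        omega
  have hdegen : ∀ k, p (T + k) = p T ∧ q (T + k) = q T ∧
      ((p (T + k) = 0 ∧ wi (T + k + 1) = wi (T + k) ∧ wj (T + k + 1) = wj (T + k) - wi (T + k)
          ∧ 0 < wj (T + k) - wi (T + k)) ∨
       (q (T + k) = 0 ∧ wj (T + k + 1) = wj (T + k) ∧ wi (T + k + 1) = wi (T + k) - wj (T + k)
          ∧ 0 < wi (T + k) - wj (T + k))) := by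
    intro k
    induction k with
    | zero =>
        have hme : m (T + 0 + 1) = m (T + 0) := by
          rw [Nat.add_assoc, hconstk, hconstk]
        obtain ⟨_, _, hd⟩ := (hmono (T + 0)).2 hme
        exact ⟨rfl, rfl, hd⟩
    | succ k ih =>
        have hme : m (T + (k+1) + 1) = m (T + (k+1)) := by
          rw [Nat.add_assoc, hconstk, hconstk]
        obtain ⟨he1, he2, hd⟩ := (hmono (T + (k+1))).2 hme
        have hmek : m (T + k + 1) = m (T + k) := by
          rw [Nat.add_assoc, hconstk, hconstk]
        obtain ⟨hf1, hf2, _⟩ := (hmono (T + k)).2 hmek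
        refine ⟨?_, ?_, hd⟩
        · show p (T + k + 1) = p T
          rw [hf1]; exact ih.1
        · show q (T + k + 1) = q T
          rw [hf2]; exact ih.2.1
  rcases eq_or_ne (p T) 0 with hpT | hpT
  · have hqT : q T ≠ 0 := (hnzt T).resolve_left (fun hc => hc hpT)
    have hstepk : ∀ k, wi (T + k + 1) = wi (T + k) ∧ wj (T + k + 1) = wj (T + k) - wi (T + k)
        ∧ 0 < wj (T + k) - wi (T + k) := by
      intro k
      obtain ⟨hp1, hq1, hd⟩ := hdegen k
      rcases hd with ⟨_, h3, h4, h5⟩ | ⟨hq0, _, _, _⟩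
      · exact ⟨h3, h4, h5⟩
      · exact absurd (hq1 ▸ hq0) hqT
    refine phase2 (fun k => wj (T + k)) (fun k => wi (T + k))
      (by simpa using (hwpos T).1) ?_
    intro k
    refine ⟨?_, ?_, (hstepk k).2.2⟩
    · show wi (T + (k + 1)) = wi (T + k)
      rw [← Nat.add_assoc]; exact (hstepk k).1
    · show wj (T + (k + 1)) = wj (T + k) - wi (T + k)
      rw [← Nat.add_assoc]; exact (hstepk k).2.1
  · have hstepk : ∀ k, wj (T + k + 1) = wj (T + k) ∧ wi (T + k + 1) = wi (T + k) - wj (T + k)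
        ∧ 0 < wi (T + k) - wj (T + k) := by
      intro k
      obtain ⟨hp1, hq1, hd⟩ := hdegen k
      rcases hd with ⟨hp0, _, _, _⟩ | ⟨_, h3, h4, h5⟩
      · exact absurd (hp1 ▸ hp0) hpT
      · exact ⟨h3, h4, h5⟩
    refine phase2 (fun k => wi (T + k)) (fun k => wj (T + k))
      (by simpa using (hwpos T).2) ?_
    intro k
    refine ⟨?_, ?_, (hstepk k).2.2⟩
    · show wj (T + (k + 1)) = wj (T + k)
      rw [← Nat.add_assoc]; exact (hstepk k).1
    · show wi (T + (k + 1)) = wi (T + k) - wj (T + k)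
      rw [← Nat.add_assoc]; exact (hstepk k).2.1

end NoInfSeqAux

open NoInfSeqAux in
/-- **Remark 3 (2).** Let `(A, v, w)` be an `n`-dimensional triple and fix `i ≠ j`.  There
is no infinite sequence of triples starting at `(A, v, w)` in which each step performs an
allowable column addition `C_{ij}` or an allowable column addition `C_{ji}`.  Moreover, if
at least one of `b_{i1}`, `b_{j1}` is nonzero, then there is no infinite sequence of
triples starting at `(A, v, w)` in which each step performs a `*`-allowable `C_{ij}` or a
`*`-allowable `C_{ji}`. -/
theorem no_infinite_allowable_sequence {n : ℕ} [NeZero n]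
    (A : Matrix (Fin n) (Fin n) ℤ) (v : Fin n → ℝ) (h : IsTriple A v)
    (i j : Fin n) (hij : i ≠ j) :
    (¬ ∃ f : ℕ → Matrix (Fin n) (Fin n) ℤ, f 0 = A ∧
        ∀ t : ℕ, (IsAllowable v (f t) i j ∧ f (t + 1) = colAdd (f t) i j) ∨
                 (IsAllowable v (f t) j i ∧ f (t + 1) = colAdd (f t) j i)) ∧
    ((Binv A i 0 ≠ 0 ∨ Binv A j 0 ≠ 0) →
      ¬ ∃ f : ℕ → Matrix (Fin n) (Fin n) ℤ, f 0 = A ∧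
        ∀ t : ℕ, (IsStarAllowable v (f t) i j ∧ f (t + 1) = colAdd (f t) i j) ∨
                 (IsStarAllowable v (f t) j i ∧ f (t + 1) = colAdd (f t) j i)) := by
  constructor
  · rintro ⟨f, hf0, hstep⟩
    have hstep' : ∀ t : ℕ, (IsStarAllowable v (f t) i j ∧ f (t + 1) = colAdd (f t) i j) ∨
        (IsStarAllowable v (f t) j i ∧ f (t + 1) = colAdd (f t) j i) := by
      intro t
      rcases hstep t with ⟨⟨h1, h2, h3⟩, he⟩ | ⟨⟨h1, h2, h3⟩, he⟩
      · exact Or.inl ⟨⟨h1, h2, le_of_lt h3⟩, he⟩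
      · exact Or.inr ⟨⟨h1, h2, le_of_lt h3⟩, he⟩
    have hnz : Binv (f 0) i 0 ≠ 0 ∨ Binv (f 0) j 0 ≠ 0 := by
      rcases hstep 0 with ⟨⟨_, _, h3⟩, _⟩ | ⟨⟨_, _, h3⟩, _⟩
      · left; intro h0; rw [h0, zero_mul] at h3; exact lt_irrefl 0 h3
      · left; intro h0; rw [h0, mul_zero] at h3; exact lt_irrefl 0 h3
    exact star_core v hij f (by rw [hf0]; exact h.det_pm)
      (by rw [hf0]; exact h.w_pos i) (by rw [hf0]; exact h.w_pos j) hstep' hnz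
  · intro hnzA
    rintro ⟨f, hf0, hstep⟩
    exact star_core v hij f (by rw [hf0]; exact h.det_pm)
      (by rw [hf0]; exact h.w_pos i) (by rw [hf0]; exact h.w_pos j) hstep
      (by rw [hf0]; exact hnzA)
end

section
/- Let n ≥ 2 and let A be an n×n matrix with nonnegative integer entries and det(A) = ±1. Suppose that the first column of B = A⁻¹ has exactly two nonzero entries, b_{i1} and b_{j1} with i ≠ j. Then b_{i1} and b_{j1} have opposite signs. -/
open Matrix

/-!
Let `b` be the first column of `A⁻¹`, so `A b = e₁` with `b` supported on `{i, j}`, i.e.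
`b_i C_i + b_j C_j = e₁` for the columns `C_i, C_j` of `A`. Since `A ≥ 0`, if `b_i, b_j < 0` the first
coordinate of the left side is `≤ 0`; if `b_i, b_j > 0` every other coordinate is a sum of two
nonnegative terms that vanishes, so `C_i` and `C_j` are both multiples of `e₁`. Then
`A₁ⱼ C_i - A₁ᵢ C_j = 0`, and invertibility of `A` forces `A₁ᵢ = A₁ⱼ = 0`, contradicting `A b = e₁`.
-/

namespace Matrix

variable {ι R : Type*} [Fintype ι] [DecidableEq ι]

theorem mulVec_apply_of_support_pair [NonUnitalNonAssocSemiring R] (A : Matrix ι ι R)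
    {b : ι → R} {i j : ι} (hij : i ≠ j) (hb : ∀ l, l ≠ i → l ≠ j → b l = 0) (k : ι) :
    (A *ᵥ b) k = A k i * b i + A k j * b j := by
  rw [mulVec, dotProduct, ← Finset.sum_pair (f := fun l => A k l * b l) hij]
  refine (Finset.sum_subset (Finset.subset_univ _) fun l _ hl => ?_).symm
  simp only [Finset.mem_insert, Finset.mem_singleton, not_or] at hl
  rw [hb l hl.1 hl.2, mul_zero]

variable [CommRing R] [LinearOrder R] [IsStrictOrderedRing R]

theorem entries_eq_zero_of_mulVec_apply_eq_zero {A : Matrix ι ι R}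
    (hA : ∀ k l, 0 ≤ A k l) {b : ι → R} {i j : ι} (hij : i ≠ j)
    (hb : ∀ l, l ≠ i → l ≠ j → b l = 0) (hbi : 0 < b i) (hbj : 0 < b j) {k : ι}
    (hk : (A *ᵥ b) k = 0) : A k i = 0 ∧ A k j = 0 := by
  rw [mulVec_apply_of_support_pair A hij hb] at hk
  have hi := mul_nonneg (hA k i) hbi.le
  have hj := mul_nonneg (hA k j) hbj.le
  exact ⟨(mul_eq_zero.mp (by linarith)).resolve_right hbi.ne',
    (mul_eq_zero.mp (by linarith)).resolve_right hbj.ne'⟩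

theorem entries_eq_zero_of_columns_supported_at {A : Matrix ι ι R} (hA : A.det ≠ 0) {i j r : ι}
    (hij : i ≠ j) (hcol : ∀ k, k ≠ r → A k i = 0 ∧ A k j = 0) : A r i = 0 ∧ A r j = 0 := by
  set v : ι → R := Pi.single i (A r j) - Pi.single j (A r i)
  have hvi : v i = A r j := by simp [v, hij]
  have hvj : v j = -A r i := by simp [v, hij.symm]
  have hv : ∀ l, l ≠ i → l ≠ j → v l = 0 := fun l hli hlj => by simp [v, hli, hlj]
  have hAv : A *ᵥ v = 0 := funext fun k => by
    rw [mulVec_apply_of_support_pair A hij hv, hvi, hvj, Pi.zero_apply]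
    by_cases hk : k = r
    · rw [hk]; ring
    · simp [hcol k hk]
  have hv0 := eq_zero_of_mulVec_eq_zero hA hAv
  rw [← neg_eq_zero, ← hvj, ← hvi, hv0]
  exact ⟨rfl, rfl⟩

theorem mul_neg_of_mulVec_eq_single_of_support_pair {A : Matrix ι ι R}
    (hA : ∀ k l, 0 ≤ A k l) (hdet : A.det ≠ 0) {b : ι → R} {i j r : ι} (hij : i ≠ j)
    (hbi : b i ≠ 0) (hbj : b j ≠ 0) (hb : ∀ l, l ≠ i → l ≠ j → b l = 0)
    (hAb : A *ᵥ b = Pi.single r 1) : b i * b j < 0 := by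
  have hrow : A r i * b i + A r j * b j = 1 := by
    rw [← mulVec_apply_of_support_pair A hij hb, hAb, Pi.single_eq_same]
  by_contra! hprod
  rcases mul_pos_iff.mp (hprod.lt_of_ne (mul_ne_zero hbi hbj).symm) with
    ⟨hbi, hbj⟩ | ⟨hbi, hbj⟩
  · have hcol : ∀ k, k ≠ r → A k i = 0 ∧ A k j = 0 := fun k hk =>
      entries_eq_zero_of_mulVec_apply_eq_zero hA hij hb hbi hbj
        (by rw [hAb, Pi.single_eq_of_ne hk])
    obtain ⟨hri, hrj⟩ := entries_eq_zero_of_columns_supported_at hdet hij hcol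
    simp [hri, hrj] at hrow
  · linarith [mul_nonpos_of_nonneg_of_nonpos (hA r i) hbi.le,
      mul_nonpos_of_nonneg_of_nonpos (hA r j) hbj.le]

end Matrix

theorem opposite_signs_of_two_nonzero_entries_general {n : ℕ} [NeZero n]
    (A : Matrix (Fin n) (Fin n) ℤ) (hA : ∀ i j, 0 ≤ A i j)
    (hdet : A.det = 1 ∨ A.det = -1)
    (i j : Fin n) (hij : i ≠ j)
    (hi : A⁻¹ i 0 ≠ 0) (hj : A⁻¹ j 0 ≠ 0)
    (hzero : ∀ l : Fin n, l ≠ i → l ≠ j → A⁻¹ l 0 = 0) :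
    A⁻¹ i 0 * A⁻¹ j 0 < 0 := by
  have hunit : IsUnit A.det := by rcases hdet with h | h <;> simp [h]
  have hcol : A *ᵥ (A⁻¹ *ᵥ Pi.single 0 1) = Pi.single 0 1 := by
    rw [mulVec_mulVec, mul_nonsing_inv A hunit, one_mulVec]
  rw [mulVec_single_one] at hcol
  exact mul_neg_of_mulVec_eq_single_of_support_pair (b := A⁻¹.col 0) hA hunit.ne_zero hij hi hj
    hzero hcol

/-- Let `n ≥ 2` and let `A` be an `n × n` matrix with nonnegative integer entries and
`det A = ±1`.  If the first column of `B = A⁻¹` (the integer inverse of `A`) has exactly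
two nonzero entries `b_{i1}` and `b_{j1}` with `i ≠ j`, then `b_{i1}` and `b_{j1}` have
opposite signs, i.e. `b_{i1} · b_{j1} < 0`. -/
theorem opposite_signs_of_two_nonzero_entries {n : ℕ} [NeZero n] (hn : 2 ≤ n)
    (A : Matrix (Fin n) (Fin n) ℤ) (hA : ∀ i j, 0 ≤ A i j)
    (hdet : A.det = 1 ∨ A.det = -1)
    (i j : Fin n) (hij : i ≠ j)
    (hi : A⁻¹ i 0 ≠ 0) (hj : A⁻¹ j 0 ≠ 0)
    (hzero : ∀ l : Fin n, l ≠ i → l ≠ j → A⁻¹ l 0 = 0) :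
    A⁻¹ i 0 * A⁻¹ j 0 < 0 :=
  opposite_signs_of_two_nonzero_entries_general A hA hdet i j hij hi hj hzero
end

section
/- Let (A, v, w) be an n-dimensional triple and suppose the column addition C_{ij} is permissible for (A, v, w), producing (A(1), v, w(1)) with w(1) = A(1)⁻¹·v. Then (A(1), v, w(1)) is again an n-dimensional triple: A(1) has nonnegative integer entries, det(A(1)) = det(A) = ±1, and all entries of w(1) are positive, with w(1)_j = w_j − w_i and w(1)_k = w_k for k ≠ j. -/
open Matrix

/-- A permissible column addition `C_{ij}` (i.e. with `w j - w i > 0`) transforms an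
`n`-dimensional triple `(A, v, w)` into an `n`-dimensional triple
`(A(1), v, w(1))` with `A(1) = colAdd A i j`, `det A(1) = det A = ±1`,
`w(1)_j = w_j - w_i`, and `w(1)_k = w_k` for `k ≠ j`. -/
theorem colAdd_isTriple {n : ℕ} (A : Matrix (Fin n) (Fin n) ℤ) (v : Fin n → ℝ)
    (h : IsTriple A v) (i j : Fin n) (hij : i ≠ j)
    (hperm : 0 < wvec A v j - wvec A v i) :
    IsTriple (colAdd A i j) v ∧
    (colAdd A i j).det = A.det ∧
    wvec (colAdd A i j) v j = wvec A v j - wvec A v i ∧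
    ∀ k : Fin n, k ≠ j → wvec (colAdd A i j) v k = wvec A v k := by
  obtain ⟨hnn, hdet, hv, hind, hw⟩ := h
  set Aℝ : Matrix (Fin n) (Fin n) ℝ := A.map (Int.cast : ℤ → ℝ) with hAR
  set w : Fin n → ℝ := wvec A v with hww
  -- determinant facts
  have hdetcast : Aℝ.det = ((A.det : ℤ) : ℝ) := ((Int.castRingHom ℝ).map_det A).symm
  have hdetA : IsUnit Aℝ.det := by
    rcases hdet with h1 | h1 <;> rw [hdetcast, h1] <;> simp
  have hdetB : (colAdd A i j).det = A.det := Matrix.det_updateCol_add_self A hij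
  set B : Matrix (Fin n) (Fin n) ℤ := colAdd A i j with hB
  set Bℝ : Matrix (Fin n) (Fin n) ℝ := B.map (Int.cast : ℤ → ℝ) with hBR
  have hdetBℝ : IsUnit Bℝ.det := by
    have : Bℝ.det = ((B.det : ℤ) : ℝ) := ((Int.castRingHom ℝ).map_det B).symm
    rcases hdet with h1 | h1 <;> rw [this, hdetB, h1] <;> simp
  -- description of Bℝ
  have hBRapp : ∀ k l, Bℝ k l = if l = i then Aℝ k i + Aℝ k j else Aℝ k l := by
    intro k l
    by_cases hl : l = i
    · subst hl
      simp [hBR, hB, colAdd, Matrix.updateCol_self, hAR]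
    · simp [hBR, hB, colAdd, Matrix.updateCol_ne hl, hAR, hl]
  -- the new w vector
  set w' : Fin n → ℝ := Function.update w j (w j - w i) with hw'
  have hw'i : w' i = w i := Function.update_of_ne hij _ _
  have hw'j : w' j = w j - w i := Function.update_self _ _ _
  have hAw : Aℝ *ᵥ w = v := by
    rw [hww, wvec, Matrix.mulVec_mulVec, Matrix.mul_nonsing_inv _ hdetA, Matrix.one_mulVec]
  have hBw' : Bℝ *ᵥ w' = v := by
    funext k
    rw [← hAw]
    show ∑ l, Bℝ k l * w' l = ∑ l, Aℝ k l * w l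
    have step1 : ∀ l, Bℝ k l * w' l =
        Aℝ k l * w' l + (if l = i then Aℝ k j * w i else 0) := by
      intro l
      rw [hBRapp]
      by_cases hl : l = i
      · subst hl; simp [hw'i]; ring
      · simp [hl]
    have step2 : ∀ l, Aℝ k l * w' l =
        Aℝ k l * w l + (if l = j then -(Aℝ k j * w i) else 0) := by
      intro l
      by_cases hl : l = j
      · subst hl; rw [hw'j]; simp; ring
      · rw [hw', Function.update_of_ne hl]; simp [hl]
    calc ∑ l, Bℝ k l * w' l
        = ∑ l, (Aℝ k l * w' l + (if l = i then Aℝ k j * w i else 0)) := by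
          exact Finset.sum_congr rfl fun l _ => step1 l
      _ = (∑ l, Aℝ k l * w' l) + Aℝ k j * w i := by
          rw [Finset.sum_add_distrib, Finset.sum_ite_eq' Finset.univ i
            (fun _ => Aℝ k j * w i)]
          simp
      _ = ((∑ l, Aℝ k l * w l) + -(Aℝ k j * w i)) + Aℝ k j * w i := by
          congr 1
          rw [Finset.sum_congr rfl fun l _ => step2 l, Finset.sum_add_distrib,
            Finset.sum_ite_eq' Finset.univ j (fun _ => -(Aℝ k j * w i))]
          simp
      _ = ∑ l, Aℝ k l * w l := by ring
  have hwvecB : wvec B v = w' := by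
    rw [wvec, ← hBR, ← hBw', Matrix.mulVec_mulVec, Matrix.nonsing_inv_mul _ hdetBℝ,
      Matrix.one_mulVec]
  refine ⟨⟨?_, ?_, hv, hind, ?_⟩, hdetB, ?_, ?_⟩
  · intro k l
    show (0 : ℤ) ≤ B k l
    rw [hB, colAdd, Matrix.updateCol_apply]
    split
    · exact add_nonneg (hnn k i) (hnn k j)
    · exact hnn k l
  · rw [hdetB]; exact hdet
  · intro k
    rw [hwvecB]
    by_cases hk : k = j
    · subst hk; rw [hw'j]; exact hperm
    · rw [hw', Function.update_of_ne hk]; exact hw k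
  · rw [hwvecB, hw'j]
  · intro k hk
    rw [hwvecB, hw', Function.update_of_ne hk]
end

section
/- Let A = (a_{ij}) be an n×n matrix with nonnegative integer entries and det(A) = ±1 such that: the (n−1)×(n−1) matrix obtained from A by deleting the first row and first column is the identity matrix; there is an index k with 1 < k ≤ n such that a_{k1} = 1 and a_{i1} = 0 for all i ≠ 1, k; and a_{1k} = a_{11} − 1. Then there exists a finite sequence of permissible row subtractions transforming A into the n×n identity matrix, where a row subtraction replaces the j-th row by the j-th row minus the i-th row (i ≠ j) and is permissible if all entries of the resulting matrix are nonnegative. -/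
/-!
Rows `1, …, n` of `A` are the unit vectors `eᵢ`, except row `k`, which is `e₀ + e_k`. Because
`a₀ₖ = a₀₀ - 1`, the first row is therefore `e₀ + ∑_{i ≠ 0} a₀ᵢ · (row i)`. Subtracting each row
`i ≠ 0` from row `0` exactly `a₀ᵢ` times never creates a negative entry (what is left of row `0` is
always `e₀` plus a nonnegative combination of nonnegative rows) and ends with row `0` equal to
`e₀`. Subtracting row `0` from row `k` then yields the identity.
-/

open Matrix

/-- A permissible row subtraction on an integer matrix: the `i`-th row is subtracted from
the `j`-th row (`i ≠ j`), and all entries of the resulting matrix are nonnegative. -/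
def RowSubStepMat {m n : ℕ} (A A' : Matrix (Fin m) (Fin n) ℤ) : Prop :=
  ∃ i j : Fin m, i ≠ j ∧ A' = A.updateRow j (fun k => A j k - A i k) ∧ ∀ k l, 0 ≤ A' k l

theorem updateRow_apply_nonneg {m n : ℕ} {M : Matrix (Fin m) (Fin n) ℤ} {j : Fin m}
    (hM : ∀ i ≠ j, ∀ l, 0 ≤ M i l) {v : Fin n → ℤ} (hv : 0 ≤ v) (i : Fin m) (l : Fin n) :
    0 ≤ M.updateRow j v i l := by
  rcases eq_or_ne i j with rfl | hij
  · simpa using hv l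
  · simpa [updateRow_ne hij] using hM i hij l

namespace RowSubStepMat

variable {m n : ℕ}

theorem reflTransGen_updateRow_add_multiset_sum (M : Matrix (Fin m) (Fin n) ℤ) (j : Fin m)
    (hM : ∀ i ≠ j, ∀ l, 0 ≤ M i l) {v : Fin n → ℤ} (hv : 0 ≤ v) (s : Multiset (Fin m))
    (hs : j ∉ s) :
    Relation.ReflTransGen RowSubStepMat
      (M.updateRow j (v + (s.map fun i => M i).sum)) (M.updateRow j v) := by
  induction s using Multiset.induction_on with
  | empty => simpa using .refl
  | cons a s ih =>
    have haj : a ≠ j := fun h => hs (h ▸ Multiset.mem_cons_self a s)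
    have hrest : 0 ≤ (s.map fun i => M i).sum :=
      Multiset.sum_nonneg fun x hx => by
        obtain ⟨i, hi, rfl⟩ := Multiset.mem_map.mp hx
        exact hM i (fun h => hs (h ▸ Multiset.mem_cons_of_mem hi))
    refine .head ⟨a, j, haj, ?_, updateRow_apply_nonneg hM (add_nonneg hv hrest)⟩
      (ih fun h => hs (Multiset.mem_cons_of_mem h))
    ext i l
    rcases eq_or_ne i j with rfl | hij
    · simp only [updateRow_self, Pi.add_apply, Multiset.map_cons, Multiset.sum_cons,
        updateRow_ne haj]
      ring
    · simp [updateRow_ne hij]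

theorem reflTransGen_updateRow_add_sum_nsmul (M : Matrix (Fin m) (Fin n) ℤ) (j : Fin m)
    (hM : ∀ i ≠ j, ∀ l, 0 ≤ M i l) {v : Fin n → ℤ} (hv : 0 ≤ v) (c : Fin m → ℕ) (hc : c j = 0) :
    Relation.ReflTransGen RowSubStepMat
      (M.updateRow j (v + ∑ i, c i • M i)) (M.updateRow j v) := by
  have hsum : ((∑ i, Multiset.replicate (c i) i).map fun i => M i).sum = ∑ i, c i • M i := by
    rw [← Multiset.coe_mapAddMonoidHom, ← Multiset.coe_sumAddMonoidHom, ← AddMonoidHom.comp_apply,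
      map_sum]
    simp
  rw [← hsum]
  refine reflTransGen_updateRow_add_multiset_sum M j hM hv _ ?_
  simpa [Multiset.mem_sum, Multiset.mem_replicate] using hc

theorem one_add_single {i j : Fin m} (hij : i ≠ j) :
    RowSubStepMat (1 + single j i 1 : Matrix (Fin m) (Fin m) ℤ) 1 := by
  refine ⟨i, j, hij, ?_, fun a b => ?_⟩
  · ext a b
    rcases eq_or_ne a j with rfl | haj
    · simp [one_apply, single_apply, hij.symm]
    · simp [updateRow_ne haj, single_apply, haj.symm]
  · rw [one_apply]; split_ifs <;> simp

end RowSubStepMat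

theorem sum_nsmul_one_add_single_row {m : ℕ} (c : Fin m → ℕ) (k j : Fin m) :
    ∑ i, c i • (1 + single k j 1 : Matrix (Fin m) (Fin m) ℤ) i =
      (fun l => (c l : ℤ)) + Pi.single j (c k : ℤ) := by
  ext l
  simp only [Finset.sum_apply, Pi.smul_apply, Matrix.add_apply, one_apply, single_apply, smul_add,
    Finset.sum_add_distrib, Pi.add_apply]
  simp [Pi.single_apply, ite_and, eq_comm]

theorem row_eq_one_add_single_of_submatrix_succ_eq_one {m : ℕ}
    {A : Matrix (Fin (m + 1)) (Fin (m + 1)) ℤ}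
    (hminor : A.submatrix Fin.succ Fin.succ = 1) {k : Fin (m + 1)}
    (hk1 : A k 0 = 1) (hcol : ∀ i, i ≠ 0 → i ≠ k → A i 0 = 0) {i : Fin (m + 1)} (hi : i ≠ 0) :
    A i = (1 + single k 0 1 : Matrix (Fin (m + 1)) (Fin (m + 1)) ℤ) i := by
  ext l
  rcases eq_or_ne l 0 with rfl | hl
  · rcases eq_or_ne i k with rfl | hik
    · simp [hk1, hi]
    · simp [hcol i hi hik, hi, hik.symm]
  · have := congr_fun₂ hminor (i.pred hi) (l.pred hl)
    simp only [submatrix_apply, Fin.succ_pred, one_apply, Fin.pred_inj] at this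
    simp [this, one_apply, hl.symm]

theorem row_reduce_special_matrix_general {n : ℕ}
    (A : Matrix (Fin (n + 1)) (Fin (n + 1)) ℤ)
    (hA : ∀ i j, 0 ≤ A i j)
    (hminor : A.submatrix Fin.succ Fin.succ = (1 : Matrix (Fin n) (Fin n) ℤ))
    (k : Fin (n + 1)) (hk : k ≠ 0)
    (hk1 : A k 0 = 1) (hcol : ∀ i : Fin (n + 1), i ≠ 0 → i ≠ k → A i 0 = 0)
    (h1k : A 0 k = A 0 0 - 1) :
    Relation.ReflTransGen RowSubStepMat A (1 : Matrix (Fin (n + 1)) (Fin (n + 1)) ℤ) := by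
  set E : Matrix (Fin (n + 1)) (Fin (n + 1)) ℤ := 1 + single k 0 1
  have hrows : ∀ i ≠ 0, A i = E i := fun i =>
    row_eq_one_add_single_of_submatrix_succ_eq_one hminor hk1 hcol
  have hreduced : A.updateRow 0 (Pi.single 0 1) = E := by
    ext i l
    rcases eq_or_ne i 0 with rfl | hi
    · simp [E, one_apply, hk, Pi.single_apply, eq_comm]
    · rw [updateRow_ne hi, hrows i hi]
  set c : Fin (n + 1) → ℕ := fun i => if i = 0 then 0 else (A 0 i).toNat
  have hdecomp : A 0 = Pi.single 0 1 + ∑ i, c i • A i := by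
    have hsum : ∑ i, c i • A i = ∑ i, c i • E i := Finset.sum_congr rfl fun i _ => by
      rcases eq_or_ne i 0 with rfl | hi
      · simp [c]
      · rw [hrows i hi]
    rw [hsum, sum_nsmul_one_add_single_row]
    ext l
    rcases eq_or_ne l 0 with rfl | hl
    · have := hA 0 k
      simp only [c, hk, h1k, ↓reduceIte, Nat.cast_ite, CharP.cast_eq_zero, Int.ofNat_toNat,
        Int.pred_toNat, Pi.add_apply, Pi.single_eq_same, zero_add]
      omega
    · simp [c, hl, hA 0 l]
  have hclear : Relation.ReflTransGen RowSubStepMat A E := by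
    have := RowSubStepMat.reflTransGen_updateRow_add_sum_nsmul A 0 (fun i _ l => hA i l)
      (v := Pi.single 0 1) (Pi.single_nonneg.2 zero_le_one) c (by simp [c])
    rwa [← hdecomp, updateRow_eq_self, hreduced] at this
  exact hclear.tail (RowSubStepMat.one_add_single hk.symm)

/-- Let `A` be a square matrix (of size `n + 1`, indexed by `Fin (n + 1)` so that the
first index is `0`) with nonnegative integer entries and `det A = ±1`, such that: the
matrix obtained from `A` by deleting the first row and first column is the identity
matrix; there is an index `k ≠ 0` with `A k 0 = 1` and `A i 0 = 0` for all `i ≠ 0, k`;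
and `A 0 k = A 0 0 - 1`.  Then there is a finite sequence of permissible row subtractions
transforming `A` into the identity matrix. -/
theorem row_reduce_special_matrix {n : ℕ}
    (A : Matrix (Fin (n + 1)) (Fin (n + 1)) ℤ)
    (hA : ∀ i j, 0 ≤ A i j) (hdet : A.det = 1 ∨ A.det = -1)
    (hminor : A.submatrix Fin.succ Fin.succ = (1 : Matrix (Fin n) (Fin n) ℤ))
    (k : Fin (n + 1)) (hk : k ≠ 0)
    (hk1 : A k 0 = 1) (hcol : ∀ i : Fin (n + 1), i ≠ 0 → i ≠ k → A i 0 = 0)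
    (h1k : A 0 k = A 0 0 - 1) :
    Relation.ReflTransGen RowSubStepMat A (1 : Matrix (Fin (n + 1)) (Fin (n + 1)) ℤ) :=
  row_reduce_special_matrix_general A hA hminor k hk hk1 hcol h1k
end
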